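/- arXiv:1107.4373 — 2 statements merged into one kernel-verified Lean document; each statement's English description precedes it below -/
import Mathlib

section
/- For any skew shape A and any partition λ ∈ supp(A), one has rows(A) ⊴ λ ⊴ cols(A)^t in dominance order. -/
/-- A skew shape `outer / inner`: the boxes of the Young diagram of `outer`
that are not boxes of the Young diagram of `inner`. -/
structure SkewShape where
  outer : YoungDiagram
  inner : YoungDiagram
  inner_le : inner ≤ outer

namespace SkewShape

/-- The set of boxes of a skew shape. -/
def cells (A : SkewShape) : Finset (ℕ × ℕ) := A.outer.cells \ A.inner.cells

/-- The size of a skew shape is its number of boxes. -/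
def size (A : SkewShape) : ℕ := A.cells.card

/-- The length of row `i` of a skew shape. -/
def rowLen (A : SkewShape) (i : ℕ) : ℕ := (A.cells.filter fun c => c.1 = i).card

/-- The length of column `j` of a skew shape. -/
def colLen (A : SkewShape) (j : ℕ) : ℕ := (A.cells.filter fun c => c.2 = j).card

/-- The set of indices of nonempty rows. -/
def rowSet (A : SkewShape) : Finset ℕ := A.cells.image Prod.fst

/-- The set of indices of nonempty columns. -/
def colSet (A : SkewShape) : Finset ℕ := A.cells.image Prod.snd

/-- The number of nonempty rows. -/
def numRows (A : SkewShape) : ℕ := A.rowSet.card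

/-- The number of nonempty columns. -/
def numCols (A : SkewShape) : ℕ := A.colSet.card

/-- `rows A`: the multiset of lengths of the nonempty rows of `A`
(equivalently, that sequence sorted into weakly decreasing order). -/
def rows (A : SkewShape) : Multiset ℕ := A.rowSet.val.map A.rowLen

/-- `cols A`: the multiset of lengths of the nonempty columns of `A`. -/
def cols (A : SkewShape) : Multiset ℕ := A.colSet.val.map A.colLen

/-- A skew shape is disconnected if its boxes can be split into two nonempty
parts such that no box of one part shares a row or a column with a box of the
other part. -/
def Disconnected (A : SkewShape) : Prop :=
  ∃ B C : Finset (ℕ × ℕ), B.Nonempty ∧ C.Nonempty ∧ B ∪ C = A.cells ∧ B ∩ C = ∅ ∧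
    ∀ b ∈ B, ∀ c ∈ C, b.1 ≠ c.1 ∧ b.2 ≠ c.2

/-- A skew shape is connected if it is nonempty and not disconnected. -/
def Connected (A : SkewShape) : Prop := A.cells.Nonempty ∧ ¬ A.Disconnected

/-- A ribbon is a connected skew shape containing no 2×2 block of boxes. -/
def Ribbon (A : SkewShape) : Prop :=
  A.Connected ∧ ∀ i j : ℕ, ¬ ((i, j) ∈ A.cells ∧ (i, j + 1) ∈ A.cells ∧
    (i + 1, j) ∈ A.cells ∧ (i + 1, j + 1) ∈ A.cells)

/-- The lengths of any two nonempty rows differ by at most one. -/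
def RowEquitable (A : SkewShape) : Prop :=
  ∀ i ∈ A.rowSet, ∀ i' ∈ A.rowSet, A.rowLen i ≤ A.rowLen i' + 1

/-- The lengths of any two nonempty columns differ by at most one. -/
def ColEquitable (A : SkewShape) : Prop :=
  ∀ j ∈ A.colSet, ∀ j' ∈ A.colSet, A.colLen j ≤ A.colLen j' + 1

/-- Equitable: both row equitable and column equitable. -/
def Equitable (A : SkewShape) : Prop := A.RowEquitable ∧ A.ColEquitable

/-- A filling of a skew shape is semistandard if its entries are positive
integers, weakly increasing along rows and strictly increasing down columns. -/
def IsSsyt (A : SkewShape) (T : ℕ × ℕ → ℕ) : Prop :=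
  (∀ c ∈ A.cells, 1 ≤ T c) ∧
  (∀ i j j', (i, j) ∈ A.cells → (i, j') ∈ A.cells → j ≤ j' → T (i, j) ≤ T (i, j')) ∧
  (∀ i i' j, (i, j) ∈ A.cells → (i', j) ∈ A.cells → i < i' → T (i, j) < T (i', j))

end SkewShape

/-- `c` comes weakly before `d` in the reverse reading order (right to left
along rows, rows top to bottom). -/
def ReadsBefore (c d : ℕ × ℕ) : Prop := c.1 < d.1 ∨ (c.1 = d.1 ∧ d.2 ≤ c.2)

instance : DecidableRel ReadsBefore := fun c d => by unfold ReadsBefore; infer_instance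

namespace SkewShape

/-- The number of boxes of `A` filled with the entry `k` by the filling `T`. -/
def content (A : SkewShape) (T : ℕ × ℕ → ℕ) (k : ℕ) : ℕ :=
  (A.cells.filter fun c => T c = k).card

/-- A Littlewood--Richardson filling: a semistandard filling such that every
prefix of the reverse reading word contains at least as many `k`'s as
`(k+1)`'s, for every positive `k`. -/
def IsLR (A : SkewShape) (T : ℕ × ℕ → ℕ) : Prop :=
  A.IsSsyt T ∧ ∀ d ∈ A.cells, ∀ k : ℕ,
    (A.cells.filter fun c => T c = k + 2 ∧ ReadsBefore c d).card ≤
    (A.cells.filter fun c => T c = k + 1 ∧ ReadsBefore c d).card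

end SkewShape

/-- The `i`-th largest part (0-indexed) of a multiset of natural numbers,
i.e. the `i`-th entry of the multiset sorted into weakly decreasing order. -/
def part (lam : Multiset ℕ) (i : ℕ) : ℕ := (lam.sort (· ≥ ·)).getD i 0

namespace SkewShape

/-- The support of a skew shape `A`: the set of partitions `lam` (multisets of
positive integers) for which there exists an LR filling of `A` of content `lam`. -/
def supp (A : SkewShape) : Set (Multiset ℕ) :=
  {lam | 0 ∉ lam ∧ ∃ T : ℕ × ℕ → ℕ, A.IsLR T ∧ ∀ i : ℕ, A.content T (i + 1) = part lam i}

/-- The set of LR fillings of `A` of content `lam` (normalized to vanish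
outside the boxes of `A`). -/
def LRset (A : SkewShape) (lam : Multiset ℕ) : Set ((ℕ × ℕ) → ℕ) :=
  {T | A.IsLR T ∧ (∀ c, c ∉ A.cells → T c = 0) ∧ ∀ i : ℕ, A.content T (i + 1) = part lam i}

/-- `s_A − s_B` is Schur-positive: for every partition, the number of LR
fillings of `B` of that content is at most the number for `A`. -/
def SchurPosDiff (A B : SkewShape) : Prop :=
  ∀ lam : Multiset ℕ, (B.LRset lam).ncard ≤ (A.LRset lam).ncard

end SkewShape

/-- The sum of the `k` largest parts of a multiset of natural numbers. -/
def psum (lam : Multiset ℕ) (k : ℕ) : ℕ := ((lam.sort (· ≥ ·)).take k).sum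

/-- Dominance order: `DomLe lam mu` means `lam ⊴ mu`, i.e. for every `k` the
sum of the `k` largest parts of `lam` is at most that of `mu`. -/
def DomLe (lam mu : Multiset ℕ) : Prop := ∀ k : ℕ, psum lam k ≤ psum mu k

/-- The conjugate (transpose) of a partition given as a multiset: its parts
are the numbers `#{x ∈ lam | x ≥ j}` for `j = 1, 2, …`. -/
def conj (lam : Multiset ℕ) : Multiset ℕ :=
  ((Finset.range lam.sum).val.map fun j => Multiset.card (lam.filter fun x => j + 1 ≤ x)).filter
    fun y => y ≠ 0
namespace SuppDomAux

open Finset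

variable {α : Type*} {β : Type*}

lemma pair_eq {c : ℕ × ℕ} {r j : ℕ} (h1 : c.1 = r) (h2 : c.2 = j) : c = (r, j) := by
  cases c; simp_all

lemma card_filter_split [DecidableEq α] (s : Finset α) (p q q' : α → Prop)
    [DecidablePred p] [DecidablePred q] [DecidablePred q']
    (h : ∀ x ∈ s, p x ↔ (q x ∨ q' x)) (h2 : ∀ x ∈ s, ¬(q x ∧ q' x)) :
    (s.filter p).card = (s.filter q).card + (s.filter q').card := by
  have hd : Disjoint (s.filter q) (s.filter q') := by
    rw [Finset.disjoint_left]
    intro a ha ha'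
    simp only [mem_filter] at ha ha'
    exact h2 a ha.1 ⟨ha.2, ha'.2⟩
  rw [← Finset.card_union_of_disjoint hd]
  congr 1
  ext x
  simp only [mem_filter, mem_union]
  constructor
  · rintro ⟨hx, hp⟩
    rcases (h x hx).1 hp with hq | hq
    · exact Or.inl ⟨hx, hq⟩
    · exact Or.inr ⟨hx, hq⟩
  · rintro (⟨hx, hq⟩ | ⟨hx, hq⟩)
    · exact ⟨hx, (h x hx).2 (Or.inl hq)⟩
    · exact ⟨hx, (h x hx).2 (Or.inr hq)⟩

lemma take_sum (l : List ℕ) (k : ℕ) :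
    (l.take k).sum = ∑ i ∈ Finset.range k, l.getD i 0 := by
  induction k with
  | zero => simp
  | succ k ih =>
    rw [Finset.sum_range_succ, ← ih, List.take_succ, List.sum_append]
    congr 1
    rw [List.getD_eq_getElem?_getD]
    cases h : l[k]? <;> simp [h]

lemma psum_eq (M : Multiset ℕ) (k : ℕ) : psum M k = ∑ i ∈ Finset.range k, part M i :=
  take_sum _ _

lemma list_map_range_sum (g : ℕ → ℕ) (m : ℕ) :
    ((List.range m).map g).sum = ∑ j ∈ Finset.range m, g j := by
  induction m with
  | zero => simp
  | succ m ih =>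
    rw [List.range_succ, List.map_append, List.sum_append, Finset.sum_range_succ, ih]
    simp

lemma filter_range_eq (q : ℕ → Bool) (hq : ∀ m n : ℕ, m ≤ n → q n = true → q m = true) :
    ∀ n : ℕ, ∃ t, t ≤ n ∧ (List.range n).filter q = List.range t := by
  intro n
  induction n with
  | zero => exact ⟨0, le_rfl, rfl⟩
  | succ n ih =>
    obtain ⟨t, htn, ht⟩ := ih
    by_cases h : q n = true
    · exact ⟨n + 1, le_rfl, List.filter_eq_self.mpr
        (fun a ha => hq a n (Nat.lt_succ_iff.mp (List.mem_range.mp ha)) h)⟩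
    · refine ⟨t, by omega, ?_⟩
      rw [List.range_succ, List.filter_append, ht]
      simp [h]

lemma multiset_filter_card_mono (μ : Multiset ℕ) (p q : ℕ → Prop)
    [DecidablePred p] [DecidablePred q] (h : ∀ x, p x → q x) :
    Multiset.card (μ.filter p) ≤ Multiset.card (μ.filter q) := by
  induction μ using Multiset.induction with
  | empty => simp
  | cons a s ih =>
    by_cases hp : p a
    · rw [Multiset.filter_cons_of_pos _ hp, Multiset.filter_cons_of_pos _ (h a hp)]
      simpa using ih
    · rw [Multiset.filter_cons_of_neg _ hp]
      by_cases hq : q a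
      · rw [Multiset.filter_cons_of_pos _ hq, Multiset.card_cons]
        omega
      · rw [Multiset.filter_cons_of_neg _ hq]
        exact ih

/-- The conjugate-part function: `gfun μ j` is the number of elements of `μ` that are `≥ j+1`. -/
def gfun (μ : Multiset ℕ) (j : ℕ) : ℕ := Multiset.card (μ.filter fun x => j + 1 ≤ x)

lemma gfun_cons (a : ℕ) (s : Multiset ℕ) (j : ℕ) :
    gfun (a ::ₘ s) j = (if j + 1 ≤ a then 1 else 0) + gfun s j := by
  unfold gfun
  by_cases h : j + 1 ≤ a
  · rw [Multiset.filter_cons_of_pos _ h, Multiset.card_cons, if_pos h]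
    exact Nat.add_comm _ 1
  · rw [Multiset.filter_cons_of_neg _ h, if_neg h]
    exact (Nat.zero_add _).symm

lemma sum_min_eq (μ : Multiset ℕ) (k : ℕ) :
    (μ.map fun x => min x k).sum = ∑ j ∈ Finset.range k, gfun μ j := by
  induction μ using Multiset.induction with
  | empty => simp [gfun]
  | cons a s ih =>
    rw [Multiset.map_cons, Multiset.sum_cons, ih]
    have h1 : ∀ j ∈ Finset.range k, gfun (a ::ₘ s) j
        = (if j + 1 ≤ a then 1 else 0) + gfun s j := fun j _ => gfun_cons a s j
    rw [Finset.sum_congr rfl h1, Finset.sum_add_distrib]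
    congr 1
    have h2 : (Finset.range k).filter (fun j => j + 1 ≤ a) = Finset.range (min a k) := by
      ext j
      simp only [Finset.mem_filter, Finset.mem_range]
      omega
    have h3 := Finset.sum_boole (ι := ℕ) (R := ℕ) (fun j => j + 1 ≤ a) (Finset.range k)
    rw [h2, Finset.card_range] at h3
    simp only [Nat.cast_id] at h3
    omega

lemma sum_min_le_psum_conj (μ : Multiset ℕ) (k : ℕ) :
    ((μ.map fun x => min x k).sum) ≤ psum (conj μ) k := by
  classical
  have hanti : ∀ m n : ℕ, m ≤ n → gfun μ n ≤ gfun μ m := by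
    intro m n hmn
    exact multiset_filter_card_mono μ _ _ (fun x hx => by omega)
  have hzero : ∀ j, μ.sum ≤ j → gfun μ j = 0 := by
    intro j hj
    unfold gfun
    rw [Multiset.card_eq_zero, Multiset.filter_eq_nil]
    intro x hx
    have := Multiset.single_le_sum (fun y _ => Nat.zero_le y) x hx
    omega
  obtain ⟨t, htn, hfil⟩ := filter_range_eq (fun j => decide (gfun μ j ≠ 0))
      (fun m n hmn hn => by
        have h1 : gfun μ n ≠ 0 := of_decide_eq_true hn
        have h2 := hanti m n hmn
        simp only [decide_eq_true_eq]
        omega) μ.sum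
  have hgt0 : ∀ j, t ≤ j → gfun μ j = 0 := by
    intro j hj
    by_cases hjs : j < μ.sum
    · by_contra hne
      have hmem : j ∈ (List.range μ.sum).filter (fun j => decide (gfun μ j ≠ 0)) := by
        rw [List.mem_filter]
        exact ⟨List.mem_range.mpr hjs, by simpa using hne⟩
      rw [hfil] at hmem
      have := List.mem_range.mp hmem
      omega
    · exact hzero j (by omega)
  have hconj : conj μ = (((List.range t).map (gfun μ) : List ℕ) : Multiset ℕ) := by
    show ((Finset.range μ.sum).val.map (gfun μ)).filter (fun y => y ≠ 0) = _
    rw [Finset.range_val]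
    rw [show (Multiset.range μ.sum) = ((List.range μ.sum : List ℕ) : Multiset ℕ) from rfl]
    rw [Multiset.map_coe, Multiset.filter_coe, Multiset.coe_eq_coe]
    rw [List.filter_map]
    have : (List.range μ.sum).filter ((fun b => decide (b ≠ 0)) ∘ (gfun μ)) = List.range t := hfil
    rw [this]
  have hsorted : (((List.range t).map (gfun μ)) : List ℕ).Pairwise (· ≥ ·) := by
    rw [List.pairwise_map]
    apply List.Pairwise.imp ?_ (List.pairwise_lt_range : List.Pairwise (· < ·) (List.range t))
    intro a b hab
    exact hanti a b (le_of_lt hab)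
  have hperm : (Multiset.sort (conj μ) (· ≥ ·)).Perm ((List.range t).map (gfun μ)) := by
    rw [← Multiset.coe_eq_coe, Multiset.sort_eq, hconj]
  have hsort : Multiset.sort (conj μ) (· ≥ ·) = (List.range t).map (gfun μ) :=
    List.Perm.eq_of_pairwise' (Multiset.pairwise_sort _ _) hsorted hperm
  rw [sum_min_eq]
  unfold psum
  rw [hsort, ← List.map_take, List.take_range, list_map_range_sum]
  have heq : ∑ j ∈ Finset.range (k ⊓ t), gfun μ j = ∑ j ∈ Finset.range k, gfun μ j := by
    apply Finset.sum_subset (Finset.range_subset_range.mpr (min_le_left k t))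
    intro j hj hnj
    simp only [Finset.mem_range] at hj hnj
    have htj : t ≤ j := by
      rcases le_total t k with h | h
      · have : k ⊓ t = t := min_eq_right h
        omega
      · have : k ⊓ t = k := min_eq_left h
        omega
    exact hgt0 j htj
  omega

lemma exists_of_le_map [DecidableEq α] [DecidableEq β] (f : α → β) (N : Multiset β) :
    ∀ (v : Multiset α), N ≤ v.map f → ∃ u, u ≤ v ∧ u.map f = N := by
  induction N using Multiset.induction with
  | empty => exact fun v _ => ⟨0, Multiset.zero_le v, rfl⟩
  | cons b N ih =>
    intro v h
    have hb : b ∈ Multiset.map f v := Multiset.mem_of_le h (Multiset.mem_cons_self b N)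
    obtain ⟨a, ha, hfa⟩ := Multiset.mem_map.mp hb
    have h2 : N ≤ (v.erase a).map f := by
      rw [Multiset.map_erase_of_mem f v ha, hfa]
      have h3 := Multiset.erase_le_erase b h
      rwa [Multiset.erase_cons_head] at h3
    obtain ⟨u, hu, hmap⟩ := ih (v.erase a) h2
    refine ⟨a ::ₘ u, ?_, by rw [Multiset.map_cons, hmap, hfa]⟩
    calc a ::ₘ u ≤ a ::ₘ v.erase a := Multiset.cons_le_cons a hu
      _ = v := Multiset.cons_erase ha

lemma exists_subset_psum [DecidableEq α] (s : Finset α) (f : α → ℕ) (k : ℕ) :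
    ∃ S : Finset α, S ⊆ s ∧ S.card ≤ k ∧ psum (s.val.map f) k = ∑ x ∈ S, f x := by
  classical
  have hNle : (↑(((s.val.map f).sort (· ≥ ·)).take k) : Multiset ℕ) ≤ s.val.map f := by
    conv_rhs => rw [← Multiset.sort_eq (s.val.map f) (· ≥ ·)]
    exact Multiset.coe_le.mpr (List.Sublist.subperm (List.take_sublist k _))
  obtain ⟨u, hu, hmap⟩ := exists_of_le_map f _ s.val hNle
  refine ⟨⟨u, Multiset.nodup_of_le hu s.nodup⟩, Finset.val_le_iff.mp hu, ?_, ?_⟩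
  · show Multiset.card u ≤ k
    have h1 : Multiset.card (u.map f) = Multiset.card u := Multiset.card_map f u
    rw [hmap, Multiset.coe_card] at h1
    have h2 := List.length_take_le k ((s.val.map f).sort (· ≥ ·))
    omega
  · rw [Finset.sum_eq_multiset_sum]
    show psum (s.val.map f) k = (Multiset.map f u).sum
    rw [hmap, Multiset.sum_coe]
    rfl

/-- Number of cells in row `r` with entry `v`. -/
def aa (A : SkewShape) (T : ℕ × ℕ → ℕ) (v r : ℕ) : ℕ :=
  (A.cells.filter fun c => T c = v ∧ c.1 = r).card

/-- Number of cells in rows above `r` with entry `v`. -/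
def cc (A : SkewShape) (T : ℕ × ℕ → ℕ) (v r : ℕ) : ℕ :=
  (A.cells.filter fun c => T c = v ∧ c.1 < r).card

/-- Number of cells in row `r` with entry `> v`. -/
def bb (A : SkewShape) (T : ℕ × ℕ → ℕ) (v r : ℕ) : ℕ :=
  (A.cells.filter fun c => v < T c ∧ c.1 = r).card

set_option maxHeartbeats 800000 in
lemma star (A : SkewShape) (T : ℕ × ℕ → ℕ) (hLR : A.IsLR T) (r k : ℕ) :
    cc A T (k + 2) r + aa A T (k + 2) r ≤ cc A T (k + 1) r := by
  classical
  obtain ⟨hssyt, hlat⟩ := hLR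
  by_cases hQ : (A.cells.filter fun c => T c = k + 2 ∧ c.1 = r).Nonempty
  · have hJ : ((A.cells.filter fun c => T c = k + 2 ∧ c.1 = r).image Prod.snd).Nonempty :=
      hQ.image _
    set j := ((A.cells.filter fun c => T c = k + 2 ∧ c.1 = r).image Prod.snd).min' hJ with hj
    obtain ⟨c₀, hc₀Q, hc₀⟩ := Finset.mem_image.mp (Finset.min'_mem _ hJ)
    have hc₀' := Finset.mem_filter.mp hc₀Q
    have hceq : c₀ = (r, j) := pair_eq hc₀'.2.2 hc₀
    have hd : (r, j) ∈ A.cells := hceq ▸ hc₀'.1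
    have hTd : T (r, j) = k + 2 := hceq ▸ hc₀'.2.1
    have hmin : ∀ c ∈ A.cells, T c = k + 2 → c.1 = r → j ≤ c.2 := by
      intro c hc h1 h2
      exact Finset.min'_le _ _ (Finset.mem_image_of_mem Prod.snd
        (Finset.mem_filter.mpr ⟨hc, h1, h2⟩))
    have hlat' := hlat (r, j) hd k
    have e1 : (A.cells.filter fun c => T c = k + 2 ∧ ReadsBefore c (r, j)).card
        = cc A T (k + 2) r + aa A T (k + 2) r := by
      have heq : (A.cells.filter fun c => T c = k + 2 ∧ ReadsBefore c (r, j))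
          = A.cells.filter fun c => T c = k + 2 ∧ (c.1 < r ∨ c.1 = r) := by
        apply Finset.filter_congr
        intro c hc
        unfold ReadsBefore
        constructor
        · rintro ⟨hT, h | ⟨h1, h2⟩⟩
          · exact ⟨hT, Or.inl h⟩
          · exact ⟨hT, Or.inr h1⟩
        · rintro ⟨hT, h | h⟩
          · exact ⟨hT, Or.inl h⟩
          · exact ⟨hT, Or.inr ⟨h, hmin c hc hT h⟩⟩
      rw [heq]
      exact card_filter_split _ _ _ _ (fun c _ => by tauto)
        (fun c _ h => by obtain ⟨⟨_, h1⟩, ⟨_, h2⟩⟩ := h; omega)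
    have e2 : (A.cells.filter fun c => T c = k + 1 ∧ ReadsBefore c (r, j)).card
        = cc A T (k + 1) r := by
      have heq : (A.cells.filter fun c => T c = k + 1 ∧ ReadsBefore c (r, j))
          = A.cells.filter fun c => T c = k + 1 ∧ c.1 < r := by
        apply Finset.filter_congr
        intro c hc
        unfold ReadsBefore
        constructor
        · rintro ⟨hT, h | ⟨h1, h2⟩⟩
          · exact ⟨hT, h⟩
          · exfalso
            have h1' : c.1 = r := h1
            have h2' : j ≤ c.2 := h2
            have hc2 : (r, c.2) ∈ A.cells := (pair_eq h1' rfl) ▸ hc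
            have hle := hssyt.2.1 r j c.2 hd hc2 h2'
            have hTc2 : T (r, c.2) = k + 1 := by
              rw [← pair_eq h1' rfl]
              exact hT
            rw [hTd] at hle
            omega
        · rintro ⟨hT, h⟩
          exact ⟨hT, Or.inl h⟩
      rw [heq]
      rfl
    rw [← e1, ← e2]
    exact hlat'
  · have haa : aa A T (k + 2) r = 0 := by
      unfold aa
      rw [Finset.card_eq_zero, ← Finset.not_nonempty_iff_eq_empty]
      exact hQ
    rw [haa, add_zero]
    by_cases hP : (A.cells.filter fun c => c.1 < r).Nonempty
    · have hR : ((A.cells.filter fun c => c.1 < r).image Prod.fst).Nonempty := hP.image _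
      set r'' := ((A.cells.filter fun c => c.1 < r).image Prod.fst).max' hR with hr''def
      obtain ⟨c₁, hc₁P, hc₁⟩ := Finset.mem_image.mp (Finset.max'_mem _ hR)
      have hc₁' := Finset.mem_filter.mp hc₁P
      have hr''lt : r'' < r := by rw [hr''def, ← hc₁]; exact hc₁'.2
      have hQ'ne : (A.cells.filter fun c => c.1 = r'').Nonempty :=
        ⟨c₁, Finset.mem_filter.mpr ⟨hc₁'.1, hc₁⟩⟩
      have hJ : ((A.cells.filter fun c => c.1 = r'').image Prod.snd).Nonempty := hQ'ne.image _
      set j := ((A.cells.filter fun c => c.1 = r'').image Prod.snd).min' hJ with hjdef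
      obtain ⟨c₂, hc₂Q, hc₂⟩ := Finset.mem_image.mp (Finset.min'_mem _ hJ)
      have hc₂' := Finset.mem_filter.mp hc₂Q
      have hd : (r'', j) ∈ A.cells := (pair_eq hc₂'.2 hc₂) ▸ hc₂'.1
      have hRB : ∀ c ∈ A.cells, (ReadsBefore c (r'', j) ↔ c.1 < r) := by
        intro c hc
        unfold ReadsBefore
        constructor
        · rintro (h | ⟨h1, _⟩)
          · have h' : c.1 < r'' := h
            omega
          · have h' : c.1 = r'' := h1
            omega
        · intro h
          have hcP : c ∈ A.cells.filter fun c => c.1 < r := Finset.mem_filter.mpr ⟨hc, h⟩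
          have hle : c.1 ≤ r'' := Finset.le_max' _ _ (Finset.mem_image_of_mem Prod.fst hcP)
          rcases eq_or_lt_of_le hle with heq | hlt
          · exact Or.inr ⟨heq, Finset.min'_le _ _ (Finset.mem_image_of_mem Prod.snd
              (Finset.mem_filter.mpr ⟨hc, heq⟩))⟩
          · exact Or.inl hlt
      have hlat' := hlat (r'', j) hd k
      have e1 : (A.cells.filter fun c => T c = k + 2 ∧ ReadsBefore c (r'', j))
          = A.cells.filter fun c => T c = k + 2 ∧ c.1 < r :=
        Finset.filter_congr fun c hc => and_congr_right fun _ => hRB c hc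
      have e2 : (A.cells.filter fun c => T c = k + 1 ∧ ReadsBefore c (r'', j))
          = A.cells.filter fun c => T c = k + 1 ∧ c.1 < r :=
        Finset.filter_congr fun c hc => and_congr_right fun _ => hRB c hc
      rw [e1, e2] at hlat'
      exact hlat'
    · have hcc : cc A T (k + 2) r = 0 := by
        unfold cc
        rw [Finset.card_eq_zero]
        apply Finset.filter_false_of_mem
        intro c hc hcon
        exact hP ⟨c, Finset.mem_filter.mpr ⟨hc, hcon.2⟩⟩
      rw [hcc]
      exact Nat.zero_le _

lemma chain (A : SkewShape) (T : ℕ × ℕ → ℕ) (hLR : A.IsLR T) (r v : ℕ) (hv : 1 ≤ v) :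
    bb A T v r ≤ cc A T v r := by
  classical
  have key : ∀ (d v : ℕ), 1 ≤ v → A.cells.sup T ≤ v + d → bb A T v r ≤ cc A T v r := by
    intro d
    induction d with
    | zero =>
      intro v hv1 hV
      have hzero : bb A T v r = 0 := by
        unfold bb
        rw [Finset.card_eq_zero]
        apply Finset.filter_false_of_mem
        intro c hc hcon
        have := Finset.le_sup (f := T) hc
        omega
      rw [hzero]
      exact Nat.zero_le _
    | succ d ih =>
      intro v hv1 hV
      have h1 : bb A T v r = aa A T (v + 1) r + bb A T (v + 1) r := by
        unfold aa bb
        rw [Nat.add_comm (Finset.card _)]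
        apply card_filter_split
        · intro c _
          constructor
          · rintro ⟨h, h2⟩
            by_cases hT : T c = v + 1
            · exact Or.inr ⟨hT, h2⟩
            · exact Or.inl ⟨by omega, h2⟩
          · rintro (⟨h, h2⟩ | ⟨h, h2⟩) <;> exact ⟨by omega, h2⟩
        · rintro c _ ⟨⟨e1, _⟩, ⟨e2, _⟩⟩
          omega
      obtain ⟨w, rfl⟩ : ∃ w, v = w + 1 := ⟨v - 1, by omega⟩
      have h2 := star A T hLR r w
      have h3 : bb A T (w + 2) r ≤ cc A T (w + 2) r := ih (w + 2) (by omega) (by omega)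
      have h1' : bb A T (w + 1) r = aa A T (w + 2) r + bb A T (w + 2) r := h1
      omega
  exact key (A.cells.sup T) v hv (by omega)

lemma claim (A : SkewShape) (T : ℕ × ℕ → ℕ) (hLR : A.IsLR T) :
    ∀ (n : ℕ) (S : Finset ℕ), S.card = n → ∀ v : ℕ,
      (∑ r ∈ S, bb A T v r) ≤ ∑ m ∈ Finset.range n, A.content T (v + m + 1) := by
  classical
  intro n
  induction n with
  | zero =>
    intro S hS v
    rw [Finset.card_eq_zero.mp hS]
    simp
  | succ n ih =>
    intro S hS v
    have hne : S.Nonempty := Finset.card_pos.mp (by omega)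
    have hr₁ : S.min' hne ∈ S := Finset.min'_mem _ _
    have hcard : (S.erase (S.min' hne)).card = n := by
      rw [Finset.card_erase_of_mem hr₁, hS]
      omega
    have hsplit : ∀ r, bb A T v r = aa A T (v + 1) r + bb A T (v + 1) r := by
      intro r
      unfold aa bb
      rw [Nat.add_comm (Finset.card _)]
      apply card_filter_split
      · intro c _
        constructor
        · rintro ⟨h, h2⟩
          by_cases hT : T c = v + 1
          · exact Or.inr ⟨hT, h2⟩
          · exact Or.inl ⟨by omega, h2⟩
        · rintro (⟨h, h2⟩ | ⟨h, h2⟩) <;> exact ⟨by omega, h2⟩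
      · rintro c _ ⟨⟨e1, _⟩, ⟨e2, _⟩⟩
        omega
    have hbracket : (∑ r ∈ S, aa A T (v + 1) r) + cc A T (v + 1) (S.min' hne)
        ≤ A.content T (v + 1) := by
      have hdisj : ∀ x ∈ S, ∀ y ∈ S, x ≠ y →
          Disjoint (A.cells.filter fun c => T c = v + 1 ∧ c.1 = x)
            (A.cells.filter fun c => T c = v + 1 ∧ c.1 = y) := by
        intro x _ y _ hxy
        rw [Finset.disjoint_left]
        intro c hc hc'
        simp only [Finset.mem_filter] at hc hc'
        exact hxy (hc.2.2 ▸ hc'.2.2 ▸ rfl)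
      have h1 : (∑ r ∈ S, aa A T (v + 1) r)
          = (S.biUnion fun r => A.cells.filter fun c => T c = v + 1 ∧ c.1 = r).card :=
        (Finset.card_biUnion hdisj).symm
      have h2 : Disjoint (S.biUnion fun r => A.cells.filter fun c => T c = v + 1 ∧ c.1 = r)
          (A.cells.filter fun c => T c = v + 1 ∧ c.1 < S.min' hne) := by
        rw [Finset.disjoint_left]
        intro c hc hc'
        obtain ⟨r, hr, hcr⟩ := Finset.mem_biUnion.mp hc
        simp only [Finset.mem_filter] at hcr hc'
        have := Finset.min'_le S r hr
        omega
      have h3 : (S.biUnion fun r => A.cells.filter fun c => T c = v + 1 ∧ c.1 = r)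
          ∪ (A.cells.filter fun c => T c = v + 1 ∧ c.1 < S.min' hne)
          ⊆ A.cells.filter fun c => T c = v + 1 := by
        apply Finset.union_subset
        · intro c hc
          obtain ⟨r, hr, hcr⟩ := Finset.mem_biUnion.mp hc
          simp only [Finset.mem_filter] at hcr ⊢
          exact ⟨hcr.1, hcr.2.1⟩
        · intro c hc
          simp only [Finset.mem_filter] at hc ⊢
          exact ⟨hc.1, hc.2.1⟩
      have h4 := Finset.card_le_card h3
      rw [Finset.card_union_of_disjoint h2] at h4
      rw [h1]
      exact h4
    have hchain := chain A T hLR (S.min' hne) (v + 1) (by omega)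
    have hih := ih (S.erase (S.min' hne)) hcard (v + 1)
    have hsum1 : (∑ r ∈ S, bb A T v r)
        = (∑ r ∈ S, aa A T (v + 1) r) + ∑ r ∈ S, bb A T (v + 1) r := by
      rw [← Finset.sum_add_distrib]
      exact Finset.sum_congr rfl fun r _ => hsplit r
    have hsum2 : (∑ r ∈ S.erase (S.min' hne), bb A T (v + 1) r) + bb A T (v + 1) (S.min' hne)
        = ∑ r ∈ S, bb A T (v + 1) r := Finset.sum_erase_add _ _ hr₁
    have hfin : ∑ m ∈ Finset.range (n + 1), A.content T (v + m + 1)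
        = (∑ m ∈ Finset.range n, A.content T (v + 1 + m + 1)) + A.content T (v + 1) := by
      rw [Finset.sum_range_succ']
      have h5 : ∀ m ∈ Finset.range n, A.content T (v + (m + 1) + 1) = A.content T (v + 1 + m + 1) := by
        intro m _
        congr 1
        omega
      rw [Finset.sum_congr rfl h5]
    omega

lemma rowLen_eq_bb (A : SkewShape) (T : ℕ × ℕ → ℕ) (hssyt : A.IsSsyt T) (r : ℕ) :
    A.rowLen r = bb A T 0 r := by
  unfold SkewShape.rowLen bb
  apply congrArg Finset.card
  apply Finset.filter_congr
  intro c hc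
  have := hssyt.1 c hc
  constructor
  · intro h
    exact ⟨by omega, h⟩
  · rintro ⟨_, h⟩
    exact h

lemma count_filter (T : ℕ × ℕ → ℕ) (s : Finset (ℕ × ℕ)) (k : ℕ) :
    (s.filter fun c => 1 ≤ T c ∧ T c ≤ k).card
      = ∑ m ∈ Finset.range k, (s.filter fun c => T c = m + 1).card := by
  classical
  induction k with
  | zero =>
    rw [Finset.sum_range_zero, Finset.card_eq_zero]
    apply Finset.filter_false_of_mem
    intro c _ h
    omega
  | succ k ih =>
    rw [Finset.sum_range_succ, ← ih]
    apply card_filter_split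
    · intro c _
      omega
    · intro c _
      omega

lemma col_bound (A : SkewShape) (T : ℕ × ℕ → ℕ) (hssyt : A.IsSsyt T) (k : ℕ) :
    (A.cells.filter fun c => 1 ≤ T c ∧ T c ≤ k).card
      ≤ ∑ j ∈ A.colSet, min (A.colLen j) k := by
  classical
  have hfib : (A.cells.filter fun c => 1 ≤ T c ∧ T c ≤ k).card
      = ∑ j ∈ A.colSet, ((A.cells.filter fun c => 1 ≤ T c ∧ T c ≤ k).filter
          fun c => c.2 = j).card := by
    apply Finset.card_eq_sum_card_fiberwise
    intro c hc
    exact Finset.mem_image_of_mem Prod.snd (Finset.mem_filter.mp hc).1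
  rw [hfib]
  apply Finset.sum_le_sum
  intro j _
  apply le_min
  · apply Finset.card_le_card
    intro c hc
    simp only [Finset.mem_filter] at hc ⊢
    exact ⟨hc.1.1, hc.2⟩
  · have hcard : ((A.cells.filter fun c => 1 ≤ T c ∧ T c ≤ k).filter fun c => c.2 = j).card
        ≤ (Finset.Icc 1 k).card := by
      apply Finset.card_le_card_of_injOn T
      · intro c hc
        simp only [Finset.mem_coe, Finset.mem_filter] at hc
        exact Finset.mem_Icc.mpr ⟨hc.1.2.1, hc.1.2.2⟩
      · intro c hc c' hc' hT
        simp only [Finset.coe_filter, Set.mem_setOf_eq, Finset.mem_filter] at hc hc'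
        by_contra hne
        have hcj : (c.1, j) ∈ A.cells := (pair_eq rfl hc.2) ▸ hc.1.1
        have hc'j : (c'.1, j) ∈ A.cells := (pair_eq rfl hc'.2) ▸ hc'.1.1
        have hTc : T (c.1, j) = T c := by rw [← pair_eq rfl hc.2]
        have hTc' : T (c'.1, j) = T c' := by rw [← pair_eq rfl hc'.2]
        have h1 : c.1 ≠ c'.1 := by
          intro h
          apply hne
          have := hc.2.trans hc'.2.symm
          cases c; cases c'
          simp_all
        rcases Nat.lt_or_ge c.1 c'.1 with h | h
        · have := hssyt.2.2 c.1 c'.1 j hcj hc'j h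
          omega
        · have hgt : c'.1 < c.1 := by omega
          have := hssyt.2.2 c'.1 c.1 j hc'j hcj hgt
          omega
    simpa [Nat.card_Icc] using hcard

lemma cols_min_sum (A : SkewShape) (k : ℕ) :
    (∑ j ∈ A.colSet, min (A.colLen j) k) = ((A.cols).map fun x => min x k).sum := by
  rw [Finset.sum_eq_multiset_sum]
  show _ = (Multiset.map _ (A.colSet.val.map A.colLen)).sum
  rw [Multiset.map_map]
  rfl

end SuppDomAux

/-- For any skew shape `A` and any partition `lam ∈ supp A`, one has
`rows A ⊴ lam ⊴ (cols A)ᵗ` in dominance order. -/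
theorem supp_mem_dominance (A : SkewShape) (lam : Multiset ℕ) (h : lam ∈ A.supp) :
    DomLe A.rows lam ∧ DomLe lam (conj A.cols) := by
  classical
  obtain ⟨h0, T, hLR, hcont⟩ := h
  have hssyt := hLR.1
  constructor
  · intro k
    obtain ⟨S, hSsub, hScard, hpsum⟩ := SuppDomAux.exists_subset_psum A.rowSet A.rowLen k
    have h1 : psum A.rows k = ∑ r ∈ S, A.rowLen r := hpsum
    rw [h1]
    have h2 : ∑ r ∈ S, A.rowLen r = ∑ r ∈ S, SuppDomAux.bb A T 0 r :=
      Finset.sum_congr rfl fun r _ => SuppDomAux.rowLen_eq_bb A T hssyt r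
    rw [h2]
    refine le_trans (SuppDomAux.claim A T hLR S.card S rfl 0) ?_
    have h4 : ∀ m ∈ Finset.range S.card, A.content T (0 + m + 1) = part lam m := by
      intro m _
      have he : (0 : ℕ) + m + 1 = m + 1 := by omega
      rw [he]
      exact hcont m
    rw [Finset.sum_congr rfl h4, SuppDomAux.psum_eq lam k]
    exact Finset.sum_le_sum_of_subset (Finset.range_subset_range.mpr hScard)
  · intro k
    have hpsum_lam : psum lam k = (A.cells.filter fun c => 1 ≤ T c ∧ T c ≤ k).card := by
      rw [SuppDomAux.count_filter, SuppDomAux.psum_eq]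
      apply Finset.sum_congr rfl
      intro m _
      exact (hcont m).symm
    rw [hpsum_lam]
    refine le_trans (SuppDomAux.col_bound A T hssyt k) ?_
    rw [SuppDomAux.cols_min_sum A k]
    exact SuppDomAux.sum_min_le_psum_conj A.cols k
end

section
/- If A and B are skew shapes with supp(A) = supp(B), then rows(A) = rows(B) and cols(A) = cols(B); in particular, A and B have the same number of nonempty rows and the same number of nonempty columns. -/

lemma countP_le_cons (a : ℕ) (t : List ℕ) (p : ℕ → Bool) :
    (a :: t).countP p ≤ t.countP p + 1 := by
  rw [List.countP_cons]; split <;> omega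

lemma sorted_getD_le_iff : ∀ (l : List ℕ), l.Pairwise (· ≥ ·) → ∀ (i q : ℕ), 1 ≤ q →
    (q ≤ l.getD i 0 ↔ i + 1 ≤ l.countP (fun x => decide (q ≤ x)))
  | [], _, i, q, hq => by simp; omega
  | a :: t, h, 0, q, hq => by
    rw [List.pairwise_cons] at h
    simp only [List.getD_cons_zero, List.countP_cons]
    constructor
    · intro hqa; simp [hqa]
    · intro h1
      by_contra hqa
      simp only [not_le] at hqa
      have h0 : (a :: t).countP (fun x => decide (q ≤ x)) = 0 := by
        rw [List.countP_eq_zero]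
        intro x hx
        rcases List.mem_cons.mp hx with rfl | hx
        · simp; omega
        · have := h.1 x hx; simp; omega
      rw [List.countP_cons] at h0; omega
  | a :: t, h, i + 1, q, hq => by
    rw [List.pairwise_cons] at h
    have IH := sorted_getD_le_iff t h.2 i q hq
    simp only [List.getD_cons_succ]
    constructor
    · intro hle
      have hi : i < t.length := by
        by_contra hc
        rw [List.getD_eq_default] at hle; omega
        omega
      have hmem : t.getD i 0 ∈ t := by
        rw [List.getD_eq_getElem _ _ hi]; exact List.getElem_mem hi
      have hqa : q ≤ a := le_trans hle (h.1 _ hmem)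
      rw [List.countP_cons]
      have := IH.mp hle
      simp [hqa]; omega
    · intro hc
      have := countP_le_cons a t (fun x => decide (q ≤ x))
      exact IH.mpr (by omega)

lemma part_le_iff (m : Multiset ℕ) (i q : ℕ) (hq : 1 ≤ q) :
    q ≤ part m i ↔ i + 1 ≤ Multiset.card (m.filter (fun x => q ≤ x)) := by
  have h := sorted_getD_le_iff (m.sort (· ≥ ·)) (Multiset.pairwise_sort m _) i q hq
  rw [part, h]
  congr 1
  have : (m.filter (fun x => q ≤ x)) = ((m.sort (· ≥ ·) : List ℕ) : Multiset ℕ).filter (fun x => q ≤ x) := by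
    rw [Multiset.sort_eq]
  rw [this, List.countP_eq_length_filter]
  rfl

lemma part_eq_of_le_iff (a b : ℕ) (h : ∀ q, 1 ≤ q → (q ≤ a ↔ q ≤ b)) : a = b := by
  rcases Nat.lt_trichotomy a b with h1 | h1 | h1
  · have := (h b (by omega)).mpr le_rfl; omega
  · exact h1
  · have := (h a (by omega)).mp le_rfl; omega

lemma psum_eq_sum_part (m : Multiset ℕ) (k : ℕ) :
    psum m k = ∑ i ∈ Finset.range k, part m i := by
  induction k with
  | zero => simp [psum]
  | succ k ih =>
    rw [Finset.sum_range_succ, ← ih, psum, psum, part]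
    rcases Nat.lt_or_ge k (m.sort (· ≥ ·)).length with h | h
    · rw [List.sum_take_succ _ _ h, List.getD_eq_getElem _ _ h]
    · rw [List.take_of_length_le h, List.take_of_length_le (by omega),
        List.getD_eq_default _ _ h]
      simp

/-- `G m q` = number of parts of `m` that are `≥ q`. -/
def Gf (m : Multiset ℕ) (q : ℕ) : ℕ := Multiset.card (m.filter (fun x => q ≤ x))

lemma Gf_antitone (m : Multiset ℕ) {q q' : ℕ} (h : q ≤ q') : Gf m q' ≤ Gf m q := by
  exact Multiset.card_le_card (Multiset.monotone_filter_right m (fun x hx => by omega))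

lemma part_le_iff' (m : Multiset ℕ) (i q : ℕ) (hq : 1 ≤ q) :
    q ≤ part m i ↔ i + 1 ≤ Gf m q := part_le_iff m i q hq

lemma part_conj (m : Multiset ℕ) (i : ℕ) : part (conj m) i = Gf m (i + 1) := by
  apply part_eq_of_le_iff
  intro q hq
  rw [part_le_iff' (conj m) i q hq]
  have hconj : (conj m).filter (fun y => q ≤ y) =
      ((Finset.range m.sum).val.map (fun j => Gf m (j + 1))).filter (fun y => q ≤ y) := by
    rw [conj, Multiset.filter_filter]
    apply Multiset.filter_congr
    intro y _
    constructor
    · rintro ⟨hy, _⟩; exact hy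
    · intro hy; exact ⟨hy, by omega⟩
  have hcard : Gf (conj m) q =
      Multiset.card ((Finset.range m.sum).val.filter (fun j => q ≤ Gf m (j + 1))) := by
    rw [Gf, hconj, Multiset.filter_map, Multiset.card_map]
    rfl
  rw [hcard, ← Finset.filter_val, ← Finset.card_def]
  constructor
  · intro hle
    have : ∃ j ∈ Finset.filter (fun j => q ≤ Gf m (j + 1)) (Finset.range m.sum), i ≤ j := by
      by_contra hc
      push_neg at hc
      have hsub : Finset.filter (fun j => q ≤ Gf m (j + 1)) (Finset.range m.sum) ⊆ Finset.range i := by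
        intro j hj
        exact Finset.mem_range.mpr (hc j hj)
      have := Finset.card_le_card hsub
      rw [Finset.card_range] at this
      omega
    obtain ⟨j, hj, hij⟩ := this
    have := (Finset.mem_filter.mp hj).2
    exact le_trans this (Gf_antitone m (by omega))
  · intro hle
    have hisum : i < m.sum := by
      have h1 : 1 ≤ Gf m (i + 1) := le_trans hq hle
      rw [Gf] at h1
      obtain ⟨x, hx⟩ := Multiset.card_pos_iff_exists_mem.mp (Nat.lt_of_lt_of_le Nat.zero_lt_one h1)
      rw [Multiset.mem_filter] at hx
      have := Multiset.single_le_sum (fun y _ => Nat.zero_le y) x hx.1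
      omega
    have hsub : Finset.range (i + 1) ⊆ Finset.filter (fun j => q ≤ Gf m (j + 1)) (Finset.range m.sum) := by
      intro j hj
      rw [Finset.mem_range] at hj
      refine Finset.mem_filter.mpr ⟨Finset.mem_range.mpr (by omega), ?_⟩
      exact le_trans hle (Gf_antitone m (by omega))
    have := Finset.card_le_card hsub
    rw [Finset.card_range] at this
    omega

lemma zero_not_mem_conj (m : Multiset ℕ) : 0 ∉ conj m := by
  intro h
  rw [conj, Multiset.mem_filter] at h
  exact h.2 rfl

lemma Gf_succ (m : Multiset ℕ) (x : ℕ) :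
    Gf m x = Gf m (x + 1) + m.count x := by
  have h := Multiset.filter_add_filter (fun y => x + 1 ≤ y) (fun y => y = x) m
  have h1 : Multiset.filter (fun y => x + 1 ≤ y ∨ y = x) m = Multiset.filter (fun y => x ≤ y) m := by
    apply Multiset.filter_congr; intro y _; constructor
    · intro hy; omega
    · intro hy; omega
  have h2 : Multiset.filter (fun y => (x + 1 ≤ y) ∧ y = x) m = 0 := by
    rw [Multiset.filter_eq_nil]
    intro y _ hy; omega
  rw [h1, h2, add_zero] at h
  have := congrArg Multiset.card h
  rw [Multiset.card_add] at this
  rw [Gf, Gf, ← this]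
  have : Multiset.filter (fun y => y = x) m = Multiset.filter (Eq x) m := by
    apply Multiset.filter_congr; intro y _; exact eq_comm
  rw [this, ← Multiset.count_eq_card_filter_eq]

lemma eq_of_Gf_eq {m m' : Multiset ℕ} (h0 : 0 ∉ m) (h0' : 0 ∉ m')
    (h : ∀ q, 1 ≤ q → Gf m q = Gf m' q) : m = m' := by
  have hcount : ∀ x, m.count x = m'.count x := by
    intro x
    match x with
    | 0 =>
      rw [Multiset.count_eq_zero_of_notMem h0, Multiset.count_eq_zero_of_notMem h0']
    | x + 1 =>
      have e1 := Gf_succ m (x + 1)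
      have e2 := Gf_succ m' (x + 1)
      have e3 := h (x + 1) (by omega)
      have e4 := h (x + 1 + 1) (by omega)
      omega
  exact Multiset.ext.mpr hcount

lemma eq_of_part_eq {m m' : Multiset ℕ} (h0 : 0 ∉ m) (h0' : 0 ∉ m')
    (h : ∀ i, part m i = part m' i) : m = m' := by
  apply eq_of_Gf_eq h0 h0'
  intro q hq
  apply part_eq_of_le_iff
  intro s hs
  constructor
  · intro hle
    have h1 : q ≤ part m (s - 1) := (part_le_iff' m (s-1) q hq).mpr (by omega)
    rw [h] at h1
    have h2 := (part_le_iff' m' (s-1) q hq).mp h1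
    omega
  · intro hle
    have h1 : q ≤ part m' (s - 1) := (part_le_iff' m' (s-1) q hq).mpr (by omega)
    rw [← h] at h1
    have h2 := (part_le_iff' m (s-1) q hq).mp h1
    omega

lemma part_eq_of_psum_eq {m m' : Multiset ℕ} (h : ∀ k, psum m k = psum m' k) :
    ∀ i, part m i = part m' i := by
  intro i
  have h1 := psum_eq_sum_part m (i + 1)
  have h2 := psum_eq_sum_part m' (i + 1)
  have h3 := psum_eq_sum_part m i
  have h4 := psum_eq_sum_part m' i
  have e1 := h (i + 1)
  have e2 := h i
  rw [Finset.sum_range_succ] at h1 h2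
  omega

lemma domle_antisymm {m m' : Multiset ℕ} (h0 : 0 ∉ m) (h0' : 0 ∉ m')
    (h1 : DomLe m m') (h2 : DomLe m' m) : m = m' :=
  eq_of_part_eq h0 h0' (part_eq_of_psum_eq (fun k => le_antisymm (h1 k) (h2 k)))

namespace SkewShape

variable (A : SkewShape)

lemma mem_cells_iff (c : ℕ × ℕ) :
    c ∈ A.cells ↔ A.inner.rowLen c.1 ≤ c.2 ∧ c.2 < A.outer.rowLen c.1 := by
  rw [cells, Finset.mem_sdiff]
  obtain ⟨i, j⟩ := c
  rw [YoungDiagram.mem_cells, YoungDiagram.mem_cells,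
    YoungDiagram.mem_iff_lt_rowLen, YoungDiagram.mem_iff_lt_rowLen]
  dsimp only
  omega

lemma rowLen_eq (i : ℕ) :
    A.rowLen i = A.outer.rowLen i - A.inner.rowLen i := by
  rw [rowLen, ← Nat.card_Ico]
  refine Finset.card_bij' (fun c _ => c.2) (fun j _ => (i, j)) ?_ ?_ ?_ ?_
  case refine_1 =>
    intro c hc
    rw [Finset.mem_filter, mem_cells_iff] at hc
    obtain ⟨⟨h1, h2⟩, h3⟩ := hc
    rw [h3] at h1 h2
    rw [Finset.mem_Ico]
    exact ⟨h1, h2⟩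
  case refine_2 =>
    intro j hj
    rw [Finset.mem_Ico] at hj
    refine Finset.mem_filter.mpr ⟨?_, rfl⟩
    rw [mem_cells_iff]
    exact ⟨hj.1, hj.2⟩
  case refine_3 =>
    intro c hc
    rw [Finset.mem_filter] at hc
    rw [← hc.2]
  case refine_4 =>
    intro j _
    rfl

lemma mem_rowSet_iff (i : ℕ) : i ∈ A.rowSet ↔ 0 < A.rowLen i := by
  rw [rowSet, rowLen, Finset.card_pos]
  constructor
  · intro h
    obtain ⟨c, hc, hci⟩ := Finset.mem_image.mp h
    exact ⟨c, Finset.mem_filter.mpr ⟨hc, hci⟩⟩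
  · rintro ⟨c, hc⟩
    rw [Finset.mem_filter] at hc
    exact Finset.mem_image.mpr ⟨c, hc.1, hc.2⟩

lemma mem_colSet_iff (j : ℕ) : j ∈ A.colSet ↔ 0 < A.colLen j := by
  rw [colSet, colLen, Finset.card_pos]
  constructor
  · intro h
    obtain ⟨c, hc, hci⟩ := Finset.mem_image.mp h
    exact ⟨c, Finset.mem_filter.mpr ⟨hc, hci⟩⟩
  · rintro ⟨c, hc⟩
    rw [Finset.mem_filter] at hc
    exact Finset.mem_image.mpr ⟨c, hc.1, hc.2⟩

lemma zero_not_mem_rows : 0 ∉ A.rows := by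
  intro h
  rw [rows] at h
  obtain ⟨i, hi, h0⟩ := Multiset.mem_map.mp h
  have := (A.mem_rowSet_iff i).mp hi
  omega

lemma zero_not_mem_cols : 0 ∉ A.cols := by
  intro h
  rw [cols] at h
  obtain ⟨j, hj, h0⟩ := Multiset.mem_map.mp h
  have := (A.mem_colSet_iff j).mp hj
  omega

lemma card_rows : Multiset.card A.rows = A.numRows := by
  rw [rows, Multiset.card_map, numRows, Finset.card_def]

lemma card_cols : Multiset.card A.cols = A.numCols := by
  rw [cols, Multiset.card_map, numCols, Finset.card_def]

lemma Gf_rows (q : ℕ) :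
    Gf A.rows q = (A.rowSet.filter (fun r => q ≤ A.rowLen r)).card := by
  rw [Gf, rows, Multiset.filter_map, Multiset.card_map, Finset.card_def, Finset.filter_val]
  rfl

lemma Gf_cols (q : ℕ) :
    Gf A.cols q = (A.colSet.filter (fun r => q ≤ A.colLen r)).card := by
  rw [Gf, cols, Multiset.filter_map, Multiset.card_map, Finset.card_def, Finset.filter_val]
  rfl

lemma rowLen_ge_of_mem {c : ℕ × ℕ} (hc : c ∈ A.cells) :
    A.outer.rowLen c.1 - c.2 ≤ A.rowLen c.1 := by
  rw [A.rowLen_eq]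
  rw [mem_cells_iff] at hc
  omega

end SkewShape

lemma readsBefore_refl (c : ℕ × ℕ) : ReadsBefore c c := Or.inr ⟨rfl, le_rfl⟩

lemma readsBefore_trans {a b c : ℕ × ℕ} (h1 : ReadsBefore a b) (h2 : ReadsBefore b c) :
    ReadsBefore a c := by
  unfold ReadsBefore at *
  omega

lemma readsBefore_antisymm {a b : ℕ × ℕ} (h1 : ReadsBefore a b) (h2 : ReadsBefore b a) :
    a = b := by
  unfold ReadsBefore at *
  rw [Prod.ext_iff]
  omega

lemma readsBefore_total (a b : ℕ × ℕ) : ReadsBefore a b ∨ ReadsBefore b a := by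
  unfold ReadsBefore
  omega

lemma readsBefore_fst_le {a b : ℕ × ℕ} (h : ReadsBefore a b) : a.1 ≤ b.1 := by
  unfold ReadsBefore at h
  omega

instance : IsTrans (ℕ × ℕ) ReadsBefore := ⟨fun _ _ _ => readsBefore_trans⟩
instance : IsAntisymm (ℕ × ℕ) ReadsBefore := ⟨fun _ _ => readsBefore_antisymm⟩
instance : IsTotal (ℕ × ℕ) ReadsBefore := ⟨readsBefore_total⟩
instance : IsRefl (ℕ × ℕ) ReadsBefore := ⟨readsBefore_refl⟩

namespace SkewShape

variable (A : SkewShape)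

/-- The canonical column filling: each box is labelled by its height in its column. -/
def Tcol (c : ℕ × ℕ) : ℕ := (A.cells.filter fun x => x.2 = c.2 ∧ x.1 ≤ c.1).card

/-- The row index of the top box of column `j`. -/
noncomputable def colMinRow (j : ℕ) : ℕ := sInf {r : ℕ | (r, j) ∈ A.cells}

variable {A}

lemma col_contig {r r' r'' j : ℕ} (h : (r, j) ∈ A.cells) (h' : (r', j) ∈ A.cells)
    (h1 : r ≤ r'') (h2 : r'' ≤ r') : (r'', j) ∈ A.cells := by
  rw [mem_cells_iff] at *
  dsimp only at *
  have e1 := A.inner.rowLen_anti r r'' h1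
  have e2 := A.outer.rowLen_anti r'' r' h2
  omega

lemma colMinRow_mem {r j : ℕ} (h : (r, j) ∈ A.cells) : (A.colMinRow j, j) ∈ A.cells :=
  Nat.sInf_mem (⟨r, h⟩ : {r : ℕ | (r, j) ∈ A.cells}.Nonempty)

lemma colMinRow_le {r j : ℕ} (h : (r, j) ∈ A.cells) : A.colMinRow j ≤ r :=
  Nat.sInf_le h

lemma Tcol_eq {r j : ℕ} (h : (r, j) ∈ A.cells) :
    A.Tcol (r, j) = r - A.colMinRow j + 1 := by
  have hmin := colMinRow_mem h
  have hle := colMinRow_le h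
  have : A.Tcol (r, j) = (Finset.Icc (A.colMinRow j) r).card := by
    rw [Tcol]
    refine Finset.card_bij' (fun x _ => x.1) (fun u _ => (u, j)) ?_ ?_ ?_ ?_
    · intro x hx
      rw [Finset.mem_filter] at hx
      dsimp only at hx
      obtain ⟨hx1, hx2, hx3⟩ := hx
      have hxj : (x.1, j) ∈ A.cells := by
        rw [← hx2]
        exact Prod.mk.eta ▸ hx1
      rw [Finset.mem_Icc]
      exact ⟨colMinRow_le hxj, hx3⟩
    · intro u hu
      rw [Finset.mem_Icc] at hu
      rw [Finset.mem_filter]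
      exact ⟨col_contig hmin h hu.1 hu.2, rfl, hu.2⟩
    · intro x hx
      rw [Finset.mem_filter] at hx
      dsimp only at hx ⊢
      rw [← hx.2.1]
    · intro u _
      rfl
  rw [this, Nat.card_Icc]
  omega

lemma Tcol_pos {c : ℕ × ℕ} (h : c ∈ A.cells) : 1 ≤ A.Tcol c := by
  rw [Tcol]
  exact Finset.card_pos.mpr ⟨c, Finset.mem_filter.mpr ⟨h, rfl, le_rfl⟩⟩

lemma colMinRow_anti {i j j' : ℕ} (h : (i, j) ∈ A.cells) (h' : (i, j') ∈ A.cells)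
    (hjj : j ≤ j') : A.colMinRow j' ≤ A.colMinRow j := by
  apply Nat.sInf_le
  have hmem := colMinRow_mem h
  have hle := colMinRow_le h
  show (A.colMinRow j, j') ∈ A.cells
  rw [mem_cells_iff] at *
  dsimp only at *
  have e1 := A.outer.rowLen_anti (A.colMinRow j) i hle
  omega

lemma le_colLen {r j : ℕ} (h : (r, j) ∈ A.cells) :
    r - A.colMinRow j + 1 ≤ A.colLen j := by
  have hmin := colMinRow_mem h
  have hle := colMinRow_le h
  rw [colLen]
  have : (Finset.Icc (A.colMinRow j) r).card ≤ (A.cells.filter fun c => c.2 = j).card := by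
    apply Finset.card_le_card_of_injOn (fun u => (u, j))
    · intro u hu
      rw [Finset.mem_coe, Finset.mem_Icc] at hu
      exact Finset.mem_filter.mpr ⟨col_contig hmin h hu.1 hu.2, rfl⟩
    · intro u _ v _ huv
      exact congrArg Prod.fst huv
  rw [Nat.card_Icc] at this
  omega

lemma cell_of_le_colLen {r j : ℕ} (h : (r, j) ∈ A.cells) {i : ℕ} (hi : i + 1 ≤ A.colLen j) :
    (A.colMinRow j + i, j) ∈ A.cells := by
  by_contra hc
  have hbound : ∀ x ∈ A.cells.filter (fun c => c.2 = j), x.1 ∈ Finset.Icc (A.colMinRow j) (A.colMinRow j + i - 1) := by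
    intro x hx
    rw [Finset.mem_filter] at hx
    have hxj : (x.1, j) ∈ A.cells := by
      rw [← hx.2]
      exact Prod.mk.eta ▸ hx.1
    have h1 := colMinRow_le hxj
    rw [Finset.mem_Icc]
    refine ⟨h1, ?_⟩
    by_contra hx2
    push_neg at hx2
    have : i ≥ 1 ∨ i = 0 := by omega
    rcases this with hi1 | hi0
    · exact hc (col_contig (colMinRow_mem hxj) hxj (by omega) (by omega))
    · subst hi0
      simp at hc
      exact hc (colMinRow_mem hxj)
  have hcard : A.colLen j ≤ (Finset.Icc (A.colMinRow j) (A.colMinRow j + i - 1)).card := by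
    rw [colLen]
    apply Finset.card_le_card_of_injOn (fun x => x.1) (fun x hx => hbound x hx)
    · intro x hx y hy hxy
      rw [Finset.mem_coe, Finset.mem_filter] at hx hy
      rw [Prod.ext_iff]
      exact ⟨hxy, hx.2.trans hy.2.symm⟩
  rw [Nat.card_Icc] at hcard
  -- colMinRow j + i - 1 + 1 - colMinRow j ≥ i + 1 is needed for contradiction
  have : i ≠ 0 := by
    intro hi0
    subst hi0
    simp at hc
    exact hc (colMinRow_mem h)
  omega

lemma Tcol_isLR : A.IsLR A.Tcol := by
  constructor
  · refine ⟨fun c hc => Tcol_pos hc, ?_, ?_⟩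
    · -- rows weakly increase
      intro i j j' h1 h2 hjj
      rw [Tcol_eq h1, Tcol_eq h2]
      have := colMinRow_anti h1 h2 hjj
      have := colMinRow_le h1
      omega
    · -- columns strictly increase
      intro i i' j h1 h2 hii
      rw [Tcol_eq h1, Tcol_eq h2]
      have := colMinRow_le h1
      omega
  · -- ballot condition
    intro d _ k
    apply Finset.card_le_card_of_injOn (fun c => (c.1 - 1, c.2))
    · intro c hc
      rw [Finset.mem_coe, Finset.mem_filter] at hc
      obtain ⟨hcell, hT, hbef⟩ := hc
      have hcc : (c.1, c.2) ∈ A.cells := Prod.mk.eta ▸ hcell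
      rw [show c = (c.1, c.2) from rfl, Tcol_eq hcc] at hT
      have hle := colMinRow_le hcc
      have hmin := colMinRow_mem hcc
      have hc1 : A.colMinRow c.2 ≤ c.1 - 1 := by omega
      have hcell' : (c.1 - 1, c.2) ∈ A.cells := col_contig hmin hcc hc1 (by omega)
      rw [Finset.mem_coe, Finset.mem_filter]
      refine ⟨hcell', ?_, ?_⟩
      · rw [Tcol_eq hcell']
        omega
      · exact Or.inl (by have := readsBefore_fst_le hbef; dsimp only; omega)
    · intro x hx y hy hxy
      rw [Finset.mem_coe, Finset.mem_filter] at hx hy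
      have hxc : (x.1, x.2) ∈ A.cells := Prod.mk.eta ▸ hx.1
      have hyc : (y.1, y.2) ∈ A.cells := Prod.mk.eta ▸ hy.1
      have hTx := hx.2.1
      have hTy := hy.2.1
      rw [show x = (x.1, x.2) from rfl, Tcol_eq hxc] at hTx
      rw [show y = (y.1, y.2) from rfl, Tcol_eq hyc] at hTy
      have hxy' : (x.1 - 1, x.2) = (y.1 - 1, y.2) := hxy
      rw [Prod.ext_iff] at hxy'
      obtain ⟨e1, e2⟩ := hxy'
      dsimp only at e1 e2
      have hlx := colMinRow_le hxc
      have hly := colMinRow_le hyc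
      rw [Prod.ext_iff]
      rw [e2] at hTx hlx
      constructor
      · omega
      · exact e2

lemma Tcol_content (i : ℕ) : A.content A.Tcol (i + 1) = part (conj A.cols) i := by
  rw [part_conj, Gf_cols, content]
  apply Finset.card_bij (fun c _ => c.2)
  · intro c hc
    rw [Finset.mem_filter] at hc
    have hcc : (c.1, c.2) ∈ A.cells := Prod.mk.eta ▸ hc.1
    have hT := hc.2
    rw [show c = (c.1, c.2) from rfl, Tcol_eq hcc] at hT
    have hle := colMinRow_le hcc
    rw [Finset.mem_filter]
    constructor
    · rw [mem_colSet_iff, colLen, Finset.card_pos]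
      exact ⟨c, Finset.mem_filter.mpr ⟨hc.1, rfl⟩⟩
    · have := le_colLen hcc
      omega
  · intro x hx y hy hxy
    rw [Finset.mem_filter] at hx hy
    have hxc : (x.1, x.2) ∈ A.cells := Prod.mk.eta ▸ hx.1
    have hyc : (y.1, y.2) ∈ A.cells := Prod.mk.eta ▸ hy.1
    have hTx := hx.2
    have hTy := hy.2
    rw [show x = (x.1, x.2) from rfl, Tcol_eq hxc] at hTx
    rw [show y = (y.1, y.2) from rfl, Tcol_eq hyc] at hTy
    have hlx := colMinRow_le hxc
    have hly := colMinRow_le hyc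
    rw [Prod.ext_iff]
    rw [hxy] at hTx hlx
    exact ⟨by omega, hxy⟩
  · intro j hj
    rw [Finset.mem_filter] at hj
    obtain ⟨hj1, hj2⟩ := hj
    rw [mem_colSet_iff, colLen, Finset.card_pos] at hj1
    obtain ⟨c, hc⟩ := hj1
    rw [Finset.mem_filter] at hc
    have hcc : (c.1, j) ∈ A.cells := by
      rw [← hc.2]; exact Prod.mk.eta ▸ hc.1
    have hcell := cell_of_le_colLen hcc hj2
    refine ⟨(A.colMinRow j + i, j), Finset.mem_filter.mpr ⟨hcell, ?_⟩, rfl⟩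
    rw [Tcol_eq hcell]
    have := colMinRow_le hcell
    omega

lemma conj_cols_mem_supp : conj A.cols ∈ A.supp :=
  ⟨zero_not_mem_conj A.cols, A.Tcol, Tcol_isLR, fun i => Tcol_content i⟩

end SkewShape

lemma exists_kth_elt (R : Finset ℕ) : ∀ (i : ℕ), i + 1 ≤ R.card →
    ∃ r ∈ R, (R.filter (· < r)).card = i := by
  intro i
  induction i with
  | zero =>
    intro h
    have hne : R.Nonempty := Finset.card_pos.mp (by omega)
    refine ⟨R.min' hne, R.min'_mem hne, ?_⟩
    rw [Finset.card_eq_zero, Finset.filter_eq_empty_iff]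
    intro x hx
    have := R.min'_le x hx
    omega
  | succ i ih =>
    intro h
    obtain ⟨r, hr, hcard⟩ := ih (by omega)
    have hsub : R.filter (· ≤ r) = insert r (R.filter (· < r)) := by
      ext x
      rw [Finset.mem_insert, Finset.mem_filter, Finset.mem_filter]
      constructor
      · rintro ⟨hx1, hx2⟩
        rcases Nat.lt_or_ge x r with h' | h'
        · exact Or.inr ⟨hx1, h'⟩
        · exact Or.inl (by omega)
      · rintro (rfl | ⟨hx1, hx2⟩)
        · exact ⟨hr, le_rfl⟩
        · exact ⟨hx1, by omega⟩
    have hgt : (R.filter (r < ·)).Nonempty := by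
      rw [← Finset.card_pos]
      have hsplit : R.filter (· ≤ r) ∪ R.filter (r < ·) = R := by
        rw [← Finset.filter_or]
        rw [Finset.filter_eq_self]
        intro x _
        omega
      have hcardle : (R.filter (· ≤ r)).card + (R.filter (r < ·)).card ≥ R.card := by
        calc R.card = (R.filter (· ≤ r) ∪ R.filter (r < ·)).card := by rw [hsplit]
        _ ≤ _ := Finset.card_union_le _ _
      have h2 : (R.filter (· ≤ r)).card = i + 1 := by
        rw [hsub, Finset.card_insert_of_notMem (by
          intro hmem
          rw [Finset.mem_filter] at hmem
          omega), hcard]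
      omega
    obtain ⟨r', hr'⟩ := hgt
    have hr'min := (R.filter (r < ·)).min'_le r' hr'
    set m := (R.filter (r < ·)).min' ⟨r', hr'⟩ with hm
    have hmmem : m ∈ R.filter (r < ·) := Finset.min'_mem _ _
    rw [Finset.mem_filter] at hmmem
    refine ⟨m, hmmem.1, ?_⟩
    have : R.filter (· < m) = R.filter (· ≤ r) := by
      ext x
      rw [Finset.mem_filter, Finset.mem_filter]
      constructor
      · rintro ⟨hx1, hx2⟩
        refine ⟨hx1, ?_⟩
        by_contra hxr
        push_neg at hxr
        have : x ∈ R.filter (r < ·) := Finset.mem_filter.mpr ⟨hx1, hxr⟩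
        have := Finset.min'_le _ x this
        omega
      · rintro ⟨hx1, hx2⟩
        exact ⟨hx1, by omega⟩
    rw [this, hsub, Finset.card_insert_of_notMem (by
      intro hmem
      rw [Finset.mem_filter] at hmem
      omega), hcard]


namespace SkewShape

variable (A : SkewShape)

/-- The canonical row filling: box `(i,j)` is labelled by one plus the number of
earlier rows whose length is at least the position of `(i,j)` from the right end
of its row. -/
def Trow (c : ℕ × ℕ) : ℕ :=
  1 + ((Finset.range c.1).filter (fun r => A.outer.rowLen c.1 - c.2 ≤ A.rowLen r)).card

/-- The latest row before `c.1` that is long enough to hold the from-right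
position of the cell `c`. -/
noncomputable def rprev (c : ℕ × ℕ) : ℕ :=
  sSup {r : ℕ | r < c.1 ∧ A.outer.rowLen c.1 - c.2 ≤ A.rowLen r}

/-- The ballot partner of a cell in the canonical row filling. -/
noncomputable def partnerRow (c : ℕ × ℕ) : ℕ × ℕ :=
  (A.rprev c, A.outer.rowLen (A.rprev c) - (A.outer.rowLen c.1 - c.2))

variable {A}

lemma qpos_pos {c : ℕ × ℕ} (h : c ∈ A.cells) : 1 ≤ A.outer.rowLen c.1 - c.2 := by
  rw [mem_cells_iff] at h
  omega

lemma qpos_le_rowLen {c : ℕ × ℕ} (h : c ∈ A.cells) :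
    A.outer.rowLen c.1 - c.2 ≤ A.rowLen c.1 := rowLen_ge_of_mem A h

lemma rowLen_le_outer (r : ℕ) : A.rowLen r ≤ A.outer.rowLen r := by
  rw [A.rowLen_eq r]; omega

/-- The cell of row `r` at distance `q` from the right end of row `r`. -/
lemma cell_from_right {r q : ℕ} (hq : 1 ≤ q) (hql : q ≤ A.rowLen r) :
    (r, A.outer.rowLen r - q) ∈ A.cells := by
  have := A.rowLen_eq r
  rw [mem_cells_iff]
  dsimp only
  omega

lemma qpos_cell_from_right {r q : ℕ} (hql : q ≤ A.rowLen r) :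
    A.outer.rowLen r - (A.outer.rowLen r - q) = q := by
  have h1 : A.rowLen r ≤ A.outer.rowLen r := rowLen_le_outer r
  omega

lemma Trow_mono_row {i j j' : ℕ} (h : (i, j) ∈ A.cells) (h' : (i, j') ∈ A.cells)
    (hjj : j ≤ j') : A.Trow (i, j) ≤ A.Trow (i, j') := by
  rw [Trow, Trow]
  dsimp only
  have hsub : ((Finset.range i).filter (fun r => A.outer.rowLen i - j ≤ A.rowLen r)) ⊆
      ((Finset.range i).filter (fun r => A.outer.rowLen i - j' ≤ A.rowLen r)) := by
    intro x hx
    rw [Finset.mem_filter] at hx ⊢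
    exact ⟨hx.1, by omega⟩
  have := Finset.card_le_card hsub
  omega

lemma Trow_strict_col {i i' j : ℕ} (h : (i, j) ∈ A.cells) (h' : (i', j) ∈ A.cells)
    (hii : i < i') : A.Trow (i, j) < A.Trow (i', j) := by
  rw [Trow, Trow]
  dsimp only
  have hsub : insert i ((Finset.range i).filter (fun r => A.outer.rowLen i - j ≤ A.rowLen r)) ⊆
      ((Finset.range i').filter (fun r => A.outer.rowLen i' - j ≤ A.rowLen r)) := by
    intro x hx
    rw [Finset.mem_insert] at hx
    have hanti := A.outer.rowLen_anti i i' (le_of_lt hii)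
    rcases hx with rfl | hx
    · rw [Finset.mem_filter, Finset.mem_range]
      have h1 := qpos_le_rowLen h
      dsimp only at h1
      exact ⟨hii, by omega⟩
    · rw [Finset.mem_filter, Finset.mem_range] at hx ⊢
      exact ⟨by omega, by omega⟩
  have hcard := Finset.card_le_card hsub
  rw [Finset.card_insert_of_notMem (by
    intro hmem
    rw [Finset.mem_filter, Finset.mem_range] at hmem
    omega)] at hcard
  omega

/-- Two cells with the same from-right position and the same `Trow` value coincide. -/
lemma Trow_inj_aux {c c' : ℕ × ℕ} (h : c ∈ A.cells) (h' : c' ∈ A.cells)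
    (hq : A.outer.rowLen c.1 - c.2 = A.outer.rowLen c'.1 - c'.2)
    (hT : A.Trow c = A.Trow c') : c = c' := by
  have key : ∀ b b' : ℕ × ℕ, b ∈ A.cells → b' ∈ A.cells →
      A.outer.rowLen b.1 - b.2 = A.outer.rowLen b'.1 - b'.2 →
      b.1 < b'.1 → A.Trow b < A.Trow b' := by
    intro b b' hb hb' hbq hlt
    rw [Trow, Trow]
    set q := A.outer.rowLen b.1 - b.2 with hqdef
    have hsub : insert b.1 ((Finset.range b.1).filter (fun r => q ≤ A.rowLen r)) ⊆
        ((Finset.range b'.1).filter (fun r => A.outer.rowLen b'.1 - b'.2 ≤ A.rowLen r)) := by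
      intro x hx
      rw [Finset.mem_insert] at hx
      rcases hx with rfl | hx
      · rw [Finset.mem_filter, Finset.mem_range]
        exact ⟨hlt, by have := qpos_le_rowLen hb; omega⟩
      · rw [Finset.mem_filter, Finset.mem_range] at hx ⊢
        exact ⟨by omega, by omega⟩
    have hcard := Finset.card_le_card hsub
    rw [Finset.card_insert_of_notMem (by
      intro hmem
      rw [Finset.mem_filter, Finset.mem_range] at hmem
      omega)] at hcard
    omega
  have hrows : c.1 = c'.1 := by
    rcases Nat.lt_trichotomy c.1 c'.1 with hlt | heq | hgt
    · have := key c c' h h' hq hlt; omega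
    · exact heq
    · have := key c' c h' h hq.symm hgt; omega
  have hcols : c.2 = c'.2 := by
    rw [mem_cells_iff] at h h'
    rw [hrows] at hq
    omega
  exact Prod.ext_iff.mpr ⟨hrows, hcols⟩

lemma partnerRow_spec {c : ℕ × ℕ} (h : c ∈ A.cells) {k : ℕ} (hT : A.Trow c = k + 2) :
    A.partnerRow c ∈ A.cells ∧ A.Trow (A.partnerRow c) = k + 1 ∧
    (A.partnerRow c).1 < c.1 ∧
    A.outer.rowLen (A.partnerRow c).1 - (A.partnerRow c).2 = A.outer.rowLen c.1 - c.2 := by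
  set q := A.outer.rowLen c.1 - c.2 with hqdef
  have hcount : ((Finset.range c.1).filter (fun r => q ≤ A.rowLen r)).card = k + 1 := by
    rw [Trow, ← hqdef] at hT
    omega
  set S := {r : ℕ | r < c.1 ∧ q ≤ A.rowLen r} with hS
  have hSfin : ∀ x, x ∈ S ↔ x ∈ (Finset.range c.1).filter (fun r => q ≤ A.rowLen r) := by
    intro x
    rw [hS, Set.mem_setOf_eq, Finset.mem_filter, Finset.mem_range]
  have hne : S.Nonempty := by
    have : ((Finset.range c.1).filter (fun r => q ≤ A.rowLen r)).Nonempty :=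
      Finset.card_pos.mp (by omega)
    obtain ⟨x, hx⟩ := this
    exact ⟨x, (hSfin x).mpr hx⟩
  have hbdd : BddAbove S := ⟨c.1, fun x hx => le_of_lt ((hS ▸ hx).1)⟩
  have hmem : A.rprev c ∈ S := by
    rw [rprev, ← hS]
    exact Nat.sSup_mem hne hbdd
  rw [hS, Set.mem_setOf_eq] at hmem
  obtain ⟨hlt, hlen⟩ := hmem
  have hq1 : 1 ≤ q := qpos_pos h
  have hcell : A.partnerRow c ∈ A.cells := by
    rw [partnerRow, ← hqdef]
    exact cell_from_right hq1 hlen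
  have hqp : A.outer.rowLen (A.partnerRow c).1 - (A.partnerRow c).2 = q := by
    rw [partnerRow, ← hqdef]
    dsimp only
    exact qpos_cell_from_right hlen
  refine ⟨hcell, ?_, hlt, hqp⟩
  -- Trow of the partner is k + 1
  have hset : (Finset.range (A.rprev c)).filter (fun r => q ≤ A.rowLen r) =
      ((Finset.range c.1).filter (fun r => q ≤ A.rowLen r)).erase (A.rprev c) := by
    ext x
    rw [Finset.mem_erase, Finset.mem_filter, Finset.mem_filter, Finset.mem_range,
      Finset.mem_range]
    constructor
    · rintro ⟨hx1, hx2⟩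
      exact ⟨by omega, by omega, hx2⟩
    · rintro ⟨hx0, hx1, hx2⟩
      have hxS : x ∈ S := (hSfin x).mpr (Finset.mem_filter.mpr ⟨Finset.mem_range.mpr hx1, hx2⟩)
      have : x ≤ A.rprev c := le_csSup hbdd hxS
      exact ⟨by omega, hx2⟩
  have hpr : A.partnerRow c = (A.rprev c, A.outer.rowLen (A.rprev c) - q) := by
    rw [partnerRow, ← hqdef]
  rw [hpr, Trow]
  dsimp only
  rw [qpos_cell_from_right hlen, hset, Finset.card_erase_of_mem (by
    rw [Finset.mem_filter, Finset.mem_range]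
    exact ⟨hlt, hlen⟩), hcount]
  omega

lemma Trow_isLR : A.IsLR A.Trow := by
  constructor
  · exact ⟨fun c _ => by rw [Trow]; omega,
      fun i j j' h1 h2 hjj => Trow_mono_row h1 h2 hjj,
      fun i i' j h1 h2 hii => Trow_strict_col h1 h2 hii⟩
  · intro d _ k
    apply Finset.card_le_card_of_injOn A.partnerRow
    · intro c hc
      rw [Finset.mem_coe, Finset.mem_filter] at hc
      obtain ⟨hcell, hT, hbef⟩ := hc
      obtain ⟨h1, h2, h3, _⟩ := partnerRow_spec hcell hT
      rw [Finset.mem_coe, Finset.mem_filter]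
      refine ⟨h1, h2, Or.inl ?_⟩
      have := readsBefore_fst_le hbef
      omega
    · intro x hx y hy hxy
      rw [Finset.mem_coe, Finset.mem_filter] at hx hy
      obtain ⟨hx1, hx2, hx3⟩ := hx
      obtain ⟨hy1, hy2, hy3⟩ := hy
      obtain ⟨px1, px2, px3, px4⟩ := partnerRow_spec hx1 hx2
      obtain ⟨py1, py2, py3, py4⟩ := partnerRow_spec hy1 hy2
      apply Trow_inj_aux hx1 hy1 ?_ (hx2.trans hy2.symm)
      rw [← px4, ← py4, hxy]

lemma Trow_content (i : ℕ) : A.content A.Trow (i + 1) = part A.rows i := by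
  rw [content]
  have : part A.rows i = (Finset.Icc 1 (part A.rows i)).card := by
    rw [Nat.card_Icc]
    omega
  rw [this]
  apply Finset.card_bij (fun c _ => A.outer.rowLen c.1 - c.2)
  · intro c hc
    rw [Finset.mem_filter] at hc
    obtain ⟨hcell, hT⟩ := hc
    set q := A.outer.rowLen c.1 - c.2 with hqdef
    rw [Finset.mem_Icc]
    refine ⟨qpos_pos hcell, ?_⟩
    rw [part_le_iff' A.rows i q (qpos_pos hcell), Gf_rows]
    have hsub : insert c.1 ((Finset.range c.1).filter (fun r => q ≤ A.rowLen r)) ⊆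
        A.rowSet.filter (fun r => q ≤ A.rowLen r) := by
      intro x hx
      rw [Finset.mem_insert] at hx
      rcases hx with rfl | hx
      · rw [Finset.mem_filter, mem_rowSet_iff]
        have h1 := qpos_le_rowLen hcell
        have h2 := qpos_pos hcell
        exact ⟨by omega, by omega⟩
      · rw [Finset.mem_filter, Finset.mem_range] at hx
        rw [Finset.mem_filter, mem_rowSet_iff]
        have h2 := qpos_pos hcell
        exact ⟨by omega, hx.2⟩
    have hcard := Finset.card_le_card hsub
    rw [Finset.card_insert_of_notMem (by
      intro hmem
      rw [Finset.mem_filter, Finset.mem_range] at hmem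
      omega)] at hcard
    rw [Trow, ← hqdef] at hT
    omega
  · intro x hx y hy hxy
    rw [Finset.mem_filter] at hx hy
    exact Trow_inj_aux hx.1 hy.1 hxy (hx.2.trans hy.2.symm)
  · intro q hq
    rw [Finset.mem_Icc] at hq
    obtain ⟨hq1, hq2⟩ := hq
    rw [part_le_iff' A.rows i q hq1, Gf_rows] at hq2
    obtain ⟨r, hr, hrcard⟩ := exists_kth_elt _ i hq2
    rw [Finset.mem_filter] at hr
    have hcell : (r, A.outer.rowLen r - q) ∈ A.cells := cell_from_right hq1 hr.2
    refine ⟨(r, A.outer.rowLen r - q), ?_, ?_⟩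
    · rw [Finset.mem_filter]
      refine ⟨hcell, ?_⟩
      rw [Trow]
      dsimp only
      rw [qpos_cell_from_right hr.2]
      have hset : (Finset.range r).filter (fun r' => q ≤ A.rowLen r') =
          (A.rowSet.filter (fun r' => q ≤ A.rowLen r')).filter (· < r) := by
        ext x
        rw [Finset.mem_filter, Finset.mem_filter, Finset.mem_filter, Finset.mem_range,
          mem_rowSet_iff]
        constructor
        · rintro ⟨hx1, hx2⟩
          exact ⟨⟨by omega, hx2⟩, hx1⟩
        · rintro ⟨⟨hx1, hx2⟩, hx3⟩
          exact ⟨hx3, hx2⟩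
      rw [hset, hrcard]
      omega
    · dsimp only
      exact qpos_cell_from_right hr.2

lemma rows_mem_supp : A.rows ∈ A.supp :=
  ⟨zero_not_mem_rows A, A.Trow, Trow_isLR, fun i => Trow_content i⟩

end SkewShape

namespace SkewShape

variable {A : SkewShape}

lemma psum_content {T : ℕ × ℕ → ℕ} (hLR : A.IsLR T) {lam : Multiset ℕ}
    (hcont : ∀ i, A.content T (i + 1) = part lam i) (k : ℕ) :
    psum lam k = (A.cells.filter (fun c => T c ≤ k)).card := by
  rw [psum_eq_sum_part]
  have hmaps : ∀ c ∈ A.cells.filter (fun c => T c ≤ k), T c - 1 ∈ Finset.range k := by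
    intro c hc
    rw [Finset.mem_filter] at hc
    have := hLR.1.1 c hc.1
    rw [Finset.mem_range]
    omega
  rw [Finset.card_eq_sum_card_fiberwise hmaps]
  apply Finset.sum_congr rfl
  intro b hb
  rw [Finset.mem_range] at hb
  rw [← hcont b, content]
  congr 1
  rw [Finset.filter_filter]
  apply Finset.filter_congr
  intro c hc
  have := hLR.1.1 c hc
  omega

lemma col_bound {T : ℕ × ℕ → ℕ} (hLR : A.IsLR T) (k j : ℕ) :
    ((A.cells.filter (fun c => T c ≤ k)).filter (fun c => c.2 = j)).card
      ≤ min (A.colLen j) k := by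
  rw [Nat.le_min]
  constructor
  · rw [colLen]
    apply Finset.card_le_card
    intro c hc
    rw [Finset.mem_filter, Finset.mem_filter] at hc
    rw [Finset.mem_filter]
    exact ⟨hc.1.1, hc.2⟩
  · have : ((A.cells.filter (fun c => T c ≤ k)).filter (fun c => c.2 = j)).card ≤
        (Finset.range k).card := by
      apply Finset.card_le_card_of_injOn (fun c => T c - 1)
      · intro c hc
        rw [Finset.mem_coe, Finset.mem_filter, Finset.mem_filter] at hc
        have := hLR.1.1 c hc.1.1
        rw [Finset.mem_coe, Finset.mem_range]
        have := hc.1.2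
        dsimp only
        omega
      · intro x hx y hy hxy
        rw [Finset.mem_coe, Finset.mem_filter, Finset.mem_filter] at hx hy
        have hx1 := hLR.1.1 x hx.1.1
        have hy1 := hLR.1.1 y hy.1.1
        dsimp only at hxy
        have hT : T x = T y := by omega
        by_contra hne
        have hxc : (x.1, x.2) ∈ A.cells := Prod.mk.eta ▸ hx.1.1
        have hyc : (y.1, y.2) ∈ A.cells := Prod.mk.eta ▸ hy.1.1
        rw [hx.2] at hxc
        rw [hy.2] at hyc
        have hrow : x.1 ≠ y.1 := by
          intro he
          apply hne
          rw [Prod.ext_iff]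
          exact ⟨he, hx.2.trans hy.2.symm⟩
        rcases Nat.lt_or_ge x.1 y.1 with hlt | hge
        · have := hLR.1.2.2 x.1 y.1 j hxc hyc hlt
          have ex : (x.1, j) = x := by rw [← hx.2]
          have ey : (y.1, j) = y := by rw [← hy.2]
          rw [ex, ey] at this
          omega
        · have hlt : y.1 < x.1 := by omega
          have := hLR.1.2.2 y.1 x.1 j hyc hxc hlt
          have ex : (x.1, j) = x := by rw [← hx.2]
          have ey : (y.1, j) = y := by rw [← hy.2]
          rw [ex, ey] at this
          omega
    rw [Finset.card_range] at this
    exact this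

lemma psum_conj_cols (k : ℕ) :
    psum (conj A.cols) k = ∑ j ∈ A.colSet, min (A.colLen j) k := by
  rw [psum_eq_sum_part]
  have h1 : ∀ i ∈ Finset.range k, part (conj A.cols) i =
      ∑ j ∈ A.colSet, (if i + 1 ≤ A.colLen j then 1 else 0) := by
    intro i _
    rw [part_conj, Gf_cols, Finset.card_filter]
  rw [Finset.sum_congr rfl h1, Finset.sum_comm]
  apply Finset.sum_congr rfl
  intro j _
  have : ∑ i ∈ Finset.range k, (if i + 1 ≤ A.colLen j then 1 else 0) =
      ((Finset.range k).filter (fun i => i + 1 ≤ A.colLen j)).card := by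
    rw [Finset.card_filter]
  rw [this]
  have : (Finset.range k).filter (fun i => i + 1 ≤ A.colLen j) =
      Finset.range (min (A.colLen j) k) := by
    ext x
    rw [Finset.mem_filter, Finset.mem_range, Finset.mem_range]
    omega
  rw [this, Finset.card_range]

lemma domle_conj_cols {lam : Multiset ℕ} (h : lam ∈ A.supp) : DomLe lam (conj A.cols) := by
  obtain ⟨h0, T, hLR, hcont⟩ := h
  intro k
  rw [psum_content hLR hcont k, psum_conj_cols]
  have hmaps : ∀ c ∈ A.cells.filter (fun c => T c ≤ k), c.2 ∈ A.colSet := by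
    intro c hc
    rw [Finset.mem_filter] at hc
    rw [colSet]
    exact Finset.mem_image.mpr ⟨c, hc.1, rfl⟩
  rw [Finset.card_eq_sum_card_fiberwise hmaps]
  apply Finset.sum_le_sum
  intro j _
  exact col_bound hLR k j

end SkewShape

/-- From a sub-multiset of a mapped multiset, extract a sub-multiset of the source. -/
lemma exists_le_of_le_map {α β : Type} [DecidableEq α] [DecidableEq β] {f : α → β} :
    ∀ {S : Multiset β} {m : Multiset α}, S ≤ m.map f → ∃ m', m' ≤ m ∧ m'.map f = S := by
  intro S
  induction S using Multiset.induction with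
  | empty =>
    intro m _
    exact ⟨0, Multiset.zero_le m, rfl⟩
  | cons a S ih =>
    intro m h
    have ha : a ∈ m.map f := Multiset.mem_of_le h (Multiset.mem_cons_self a S)
    obtain ⟨b, hb, rfl⟩ := Multiset.mem_map.mp ha
    have h1 : S ≤ (m.map f).erase (f b) := by
      have := Multiset.erase_le_erase (f b) h
      rwa [Multiset.erase_cons_head] at this
    have h2 : (m.map f).erase (f b) = (m.erase b).map f := by
      conv_lhs => rw [← Multiset.cons_erase hb]
      rw [Multiset.map_cons, Multiset.erase_cons_head]
    rw [h2] at h1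
    obtain ⟨m', hm', hmap⟩ := ih h1
    refine ⟨b ::ₘ m', ?_, ?_⟩
    · calc b ::ₘ m' ≤ b ::ₘ m.erase b := Multiset.cons_le_cons b hm'
      _ = m := Multiset.cons_erase hb
    · rw [Multiset.map_cons, hmap]

section
attribute [-instance] instBEqProd
/-- In a sorted list, if at least `r` members of the underlying finset read
(weakly) before `b`, then the element at index `r - 1` reads before `b`. -/
lemma sort_index_readsBefore (s : Finset (ℕ × ℕ)) (b : ℕ × ℕ) (r : ℕ) (hr : 1 ≤ r)
    (hcard : r ≤ (s.filter (fun x => ReadsBefore x b)).card) :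
    ∃ h : r - 1 < (s.sort ReadsBefore).length,
      ReadsBefore ((s.sort ReadsBefore)[r-1]) b := by
  set L := s.sort ReadsBefore with hL
  have hlen : L.length = s.card := Finset.length_sort ReadsBefore
  have hfle : (s.filter (fun x => ReadsBefore x b)).card ≤ s.card :=
    Finset.card_le_card (Finset.filter_subset _ _)
  have hidx : r - 1 < L.length := by omega
  refine ⟨hidx, ?_⟩
  by_contra hnot
  -- every element of the filter set has index < r - 1 in L
  have key : ∀ x ∈ s.filter (fun x => ReadsBefore x b), List.idxOf x L < r - 1 := by
    intro x hx
    rw [Finset.mem_filter] at hx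
    have hxL : x ∈ L := (Finset.mem_sort ReadsBefore).mpr hx.1
    have hxidx : List.idxOf x L < L.length := List.idxOf_lt_length_iff.mpr hxL
    by_contra hge
    push_neg at hge
    rcases Nat.eq_or_lt_of_le hge with heq | hlt
    · apply hnot
      have h2 : L[r-1]'hidx = L[List.idxOf x L]'hxidx := by
        congr 1
      rw [h2, List.getElem_idxOf hxidx]
      exact hx.2
    · apply hnot
      have hrel : ReadsBefore (L[r-1]) (L[List.idxOf x L]) := by
        have hs := Finset.pairwise_sort s ReadsBefore
        exact hs.rel_get_of_lt (a := ⟨r-1, hidx⟩) (b := ⟨List.idxOf x L, hxidx⟩) hlt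
      rw [List.getElem_idxOf hxidx] at hrel
      exact readsBefore_trans hrel hx.2
  have hinj : ∀ x ∈ s.filter (fun x => ReadsBefore x b), ∀ y ∈ s.filter (fun x => ReadsBefore x b),
      List.idxOf x L = List.idxOf y L → x = y := by
    intro x hx y hy hxy
    rw [Finset.mem_filter] at hx hy
    have hxL : x ∈ L := (Finset.mem_sort ReadsBefore).mpr hx.1
    have hyL : y ∈ L := (Finset.mem_sort ReadsBefore).mpr hy.1
    have h1 : L[List.idxOf x L]'(List.idxOf_lt_length_iff.mpr hxL) = x := List.getElem_idxOf _
    have h2 : L[List.idxOf y L]'(List.idxOf_lt_length_iff.mpr hyL) = y := List.getElem_idxOf _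
    rw [← h1, ← h2]
    congr 1
  have hle2 : (s.filter (fun x => ReadsBefore x b)).card ≤ (Finset.range (r-1)).card := by
    apply Finset.card_le_card_of_injOn (fun x => List.idxOf x L)
    · intro x hx
      rw [Finset.mem_coe, Finset.mem_range]
      exact key x hx
    · intro x hx y hy hxy
      exact hinj x (Finset.mem_coe.mp hx) y (Finset.mem_coe.mp hy) hxy
  rw [Finset.card_range] at hle2
  omega
end

namespace SkewShape

variable (A : SkewShape) (T : ℕ × ℕ → ℕ)

/-- The reading-order rank of a cell among the cells with the same entry. -/
def rankOf (c : ℕ × ℕ) : ℕ := (A.cells.filter (fun x => T x = T c ∧ ReadsBefore x c)).card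

/-- The matching step: the cell with entry one less whose rank equals that of `c`. -/
noncomputable def sigmaStep (c : ℕ × ℕ) : ℕ × ℕ :=
  ((A.cells.filter (fun x => T x = T c - 1)).sort ReadsBefore).getD (rankOf A T c - 1) (0, 0)

variable {A T}

lemma rank_pos {c : ℕ × ℕ} (hc : c ∈ A.cells) : 1 ≤ rankOf A T c := by
  rw [rankOf]
  exact Finset.card_pos.mpr ⟨c, Finset.mem_filter.mpr ⟨hc, rfl, readsBefore_refl c⟩⟩

lemma rank_lt_of_readsBefore {c c' : ℕ × ℕ} (hc' : c' ∈ A.cells)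
    (hT : T c = T c') (hne : c ≠ c') (hbef : ReadsBefore c c') :
    rankOf A T c < rankOf A T c' := by
  rw [rankOf, rankOf]
  have hsub : insert c' (A.cells.filter (fun x => T x = T c ∧ ReadsBefore x c)) ⊆
      A.cells.filter (fun x => T x = T c' ∧ ReadsBefore x c') := by
    intro x hx
    rw [Finset.mem_insert] at hx
    rcases hx with rfl | hx
    · exact Finset.mem_filter.mpr ⟨hc', rfl, readsBefore_refl x⟩
    · rw [Finset.mem_filter] at hx ⊢
      exact ⟨hx.1, hT ▸ hx.2.1, readsBefore_trans hx.2.2 hbef⟩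
  have hcard := Finset.card_le_card hsub
  rw [Finset.card_insert_of_notMem (by
    intro hmem
    rw [Finset.mem_filter] at hmem
    exact hne (readsBefore_antisymm hbef hmem.2.2))] at hcard
  omega

lemma rank_inj {c c' : ℕ × ℕ} (hc : c ∈ A.cells) (hc' : c' ∈ A.cells)
    (hT : T c = T c') (hrank : rankOf A T c = rankOf A T c') : c = c' := by
  by_contra hne
  rcases readsBefore_total c c' with hbef | hbef
  · have := rank_lt_of_readsBefore hc' hT hne hbef
    omega
  · have := rank_lt_of_readsBefore hc hT.symm (fun h => hne h.symm) hbef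
    omega

lemma sigmaStep_full (hLR : A.IsLR T) {c : ℕ × ℕ} {m : ℕ} (hc : c ∈ A.cells) (h2 : 2 ≤ T c)
    (hm : m = T c - 1) :
    ∃ hidx : rankOf A T c - 1 <
        ((A.cells.filter (fun x => T x = m)).sort ReadsBefore).length,
      sigmaStep A T c =
        ((A.cells.filter (fun x => T x = m)).sort ReadsBefore)[rankOf A T c - 1]'hidx ∧
      ReadsBefore (sigmaStep A T c) c := by
  subst hm
  have hball := hLR.2 c hc (T c - 1 - 1)
  have e1 : T c - 1 - 1 + 2 = T c := by omega
  have e2 : T c - 1 - 1 + 1 = T c - 1 := by omega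
  rw [e1, e2] at hball
  have hrank : rankOf A T c ≤
      ((A.cells.filter (fun x => T x = T c - 1)).filter (fun x => ReadsBefore x c)).card := by
    rw [Finset.filter_filter]
    exact le_trans (le_of_eq rfl) hball
  obtain ⟨hidx, hbef⟩ := sort_index_readsBefore (A.cells.filter (fun x => T x = T c - 1)) c
    (rankOf A T c) (rank_pos hc) hrank
  refine ⟨hidx, ?_, ?_⟩
  · rw [sigmaStep]
    exact List.getD_eq_getElem _ _ hidx
  · rw [sigmaStep, List.getD_eq_getElem _ _ hidx]
    exact hbef

lemma sigmaStep_spec (hLR : A.IsLR T) {c : ℕ × ℕ} (hc : c ∈ A.cells) (h2 : 2 ≤ T c) :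
    sigmaStep A T c ∈ A.cells ∧ T (sigmaStep A T c) = T c - 1 ∧ (sigmaStep A T c).1 < c.1 := by
  obtain ⟨hidx, hval, hbef⟩ := sigmaStep_full hLR hc h2 rfl
  have hmem : sigmaStep A T c ∈ A.cells.filter (fun x => T x = T c - 1) := by
    rw [hval]
    exact (Finset.mem_sort ReadsBefore).mp (List.getElem_mem _)
  rw [Finset.mem_filter] at hmem
  refine ⟨hmem.1, hmem.2, ?_⟩
  rcases hbef with hlt | ⟨heq, hle⟩
  · exact hlt
  · exfalso
    have hc1 : (c.1, c.2) ∈ A.cells := Prod.mk.eta ▸ hc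
    have hc2 : (c.1, (sigmaStep A T c).2) ∈ A.cells := by
      rw [← heq]
      exact Prod.mk.eta ▸ hmem.1
    have := hLR.1.2.1 c.1 c.2 (sigmaStep A T c).2 hc1 hc2 hle
    have ec : (c.1, c.2) = c := rfl
    have es : (c.1, (sigmaStep A T c).2) = sigmaStep A T c := by
      rw [← heq]
    rw [ec, es] at this
    omega

lemma sigmaStep_inj (hLR : A.IsLR T) {c c' : ℕ × ℕ} (hc : c ∈ A.cells) (hc' : c' ∈ A.cells)
    (hT : T c = T c') (h2 : 2 ≤ T c) (heq : sigmaStep A T c = sigmaStep A T c') : c = c' := by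
  obtain ⟨hidx, hval, _⟩ := sigmaStep_full hLR hc h2 rfl
  obtain ⟨hidx', hval', _⟩ := sigmaStep_full (m := T c - 1) hLR hc' (by omega) (by rw [hT])
  have hnodup : ((A.cells.filter (fun x => T x = T c - 1)).sort ReadsBefore).Nodup :=
    Finset.sort_nodup _ ReadsBefore
  have hranks : rankOf A T c - 1 = rankOf A T c' - 1 := by
    rw [← hnodup.getElem_inj_iff (hi := hidx) (hj := hidx')]
    rw [← hval, ← hval', heq]
  have h1 := rank_pos (T := T) hc
  have h1' := rank_pos (T := T) hc'
  exact rank_inj hc hc' hT (by omega)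

lemma sigma_iter_spec (hLR : A.IsLR T) :
    ∀ (n : ℕ) {c : ℕ × ℕ}, c ∈ A.cells → n < T c →
      (sigmaStep A T)^[n] c ∈ A.cells ∧ T ((sigmaStep A T)^[n] c) = T c - n ∧
      (1 ≤ n → ((sigmaStep A T)^[n] c).1 < c.1) := by
  intro n
  induction n with
  | zero =>
    intro c hc _
    simp only [Function.iterate_zero_apply]
    exact ⟨hc, by omega, by omega⟩
  | succ n ih =>
    intro c hc hn
    obtain ⟨h1, h2, h3⟩ := ih hc (by omega)
    rw [Function.iterate_succ_apply']
    have h4 : 2 ≤ T ((sigmaStep A T)^[n] c) := by omega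
    obtain ⟨g1, g2, g3⟩ := sigmaStep_spec hLR h1 h4
    refine ⟨g1, by omega, ?_⟩
    intro _
    rcases Nat.eq_zero_or_pos n with rfl | hpos
    · simp only [Function.iterate_zero_apply] at g3 ⊢
      exact g3
    · have := h3 hpos
      omega

lemma sigma_iter_inj (hLR : A.IsLR T) :
    ∀ (n : ℕ) {c c' : ℕ × ℕ}, c ∈ A.cells → c' ∈ A.cells → T c = T c' → n < T c →
      (sigmaStep A T)^[n] c = (sigmaStep A T)^[n] c' → c = c' := by
  intro n
  induction n with
  | zero =>
    intro c c' _ _ _ _ h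
    simpa using h
  | succ n ih =>
    intro c c' hc hc' hT hn heq
    rw [Function.iterate_succ_apply', Function.iterate_succ_apply'] at heq
    obtain ⟨h1, h2, _⟩ := sigma_iter_spec hLR n hc (by omega)
    obtain ⟨h1', h2', _⟩ := sigma_iter_spec hLR n hc' (by rw [← hT]; omega)
    have hTeq : T ((sigmaStep A T)^[n] c) = T ((sigmaStep A T)^[n] c') := by omega
    have h4 : 2 ≤ T ((sigmaStep A T)^[n] c) := by omega
    have := sigmaStep_inj hLR h1 h1' hTeq h4 heq
    exact ih hc hc' hT (by omega) this

lemma chain_absurd (hLR : A.IsLR T) {x y : ℕ × ℕ} (hx : x ∈ A.cells) (hy : y ∈ A.cells)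
    {j : ℕ} (hj : 1 ≤ j) (hjx : j < T x) (hjy : j < T y) (hrow : x.1 = y.1)
    (hlt : T x < T y)
    (heq : (sigmaStep A T)^[T x - j] x = (sigmaStep A T)^[T y - j] y) : False := by
  have hsplit : (sigmaStep A T)^[T y - j] y =
      (sigmaStep A T)^[T x - j] ((sigmaStep A T)^[T y - T x] y) := by
    rw [← Function.iterate_add_apply]
    congr 1
    omega
  obtain ⟨hz1, hz2, hz3⟩ := sigma_iter_spec hLR (T y - T x) hy (by omega)
  have hTz : T ((sigmaStep A T)^[T y - T x] y) = T x := by omega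
  have hxz : x = (sigmaStep A T)^[T y - T x] y := by
    apply sigma_iter_inj hLR (T x - j) hx hz1 hTz.symm (by omega)
    rw [← hsplit]
    exact heq
  have hzrow := hz3 (by omega)
  rw [← hxz] at hzrow
  omega

end SkewShape

namespace SkewShape

variable {A : SkewShape}

lemma domle_rows {lam : Multiset ℕ} (h : lam ∈ A.supp) : DomLe A.rows lam := by
  obtain ⟨h0, T, hLR, hcont⟩ := h
  intro k
  rw [psum_content hLR hcont k]
  -- extract the k largest rows as a subset K of rowSet
  have hsub : (↑((A.rows.sort (· ≥ ·)).take k) : Multiset ℕ) ≤ A.rowSet.val.map A.rowLen := by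
    calc (↑((A.rows.sort (· ≥ ·)).take k) : Multiset ℕ)
        ≤ ↑(A.rows.sort (· ≥ ·)) := Multiset.coe_le.mpr (List.take_sublist k _).subperm
      _ = A.rows := Multiset.sort_eq _ _
      _ = A.rowSet.val.map A.rowLen := rfl
  obtain ⟨Km, hKle, hKmap⟩ := exists_le_of_le_map hsub
  have hnodup : Km.Nodup := Multiset.nodup_of_le hKle A.rowSet.nodup
  set K : Finset ℕ := ⟨Km, hnodup⟩ with hK
  have hKcard : K.card ≤ k := by
    have h1 : K.card = Multiset.card (Km.map A.rowLen) := by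
      rw [Finset.card_def, Multiset.card_map]
    rw [h1, hKmap]
    simp only [Multiset.coe_card]
    exact List.length_take_le _ _
  have hsum : psum A.rows k = ∑ r ∈ K, A.rowLen r := by
    have h1 : ∑ r ∈ K, A.rowLen r = (Km.map A.rowLen).sum := rfl
    rw [h1, hKmap, psum]
    simp
  rw [hsum]
  -- counting the cells living in the K rows
  have hfib : ∑ r ∈ K, A.rowLen r = (A.cells.filter (fun c => c.1 ∈ K)).card := by
    have hmaps : ∀ c ∈ A.cells.filter (fun c => c.1 ∈ K), c.1 ∈ K := by
      intro c hc
      exact (Finset.mem_filter.mp hc).2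
    rw [Finset.card_eq_sum_card_fiberwise hmaps]
    apply Finset.sum_congr rfl
    intro r hr
    rw [rowLen]
    congr 1
    rw [Finset.filter_filter]
    apply Finset.filter_congr
    intro c _
    constructor
    · intro h1
      exact ⟨by rw [h1]; exact hr, h1⟩
    · intro h1
      exact h1.2
  rw [hfib]
  -- the injection from cells in the K rows into cells with small entries
  set jK : ℕ × ℕ → ℕ := fun c => (K.filter (· ≤ c.1)).card with hjK
  have hj_pos : ∀ c : ℕ × ℕ, c.1 ∈ K → 1 ≤ jK c := by
    intro c hc
    exact Finset.card_pos.mpr ⟨c.1, Finset.mem_filter.mpr ⟨hc, le_rfl⟩⟩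
  have hj_le : ∀ c : ℕ × ℕ, jK c ≤ k :=
    fun c => le_trans (Finset.card_le_card (Finset.filter_subset _ _)) hKcard
  have hj_strict : ∀ c c' : ℕ × ℕ, c.1 < c'.1 → c'.1 ∈ K → jK c < jK c' := by
    intro c c' hlt hc'
    simp only [hjK]
    have hsub2 : insert c'.1 (K.filter (· ≤ c.1)) ⊆ K.filter (· ≤ c'.1) := by
      intro x hx
      rw [Finset.mem_insert] at hx
      rcases hx with rfl | hx
      · exact Finset.mem_filter.mpr ⟨hc', le_rfl⟩
      · rw [Finset.mem_filter] at hx ⊢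
        exact ⟨hx.1, by omega⟩
    have hcard2 := Finset.card_le_card hsub2
    rw [Finset.card_insert_of_notMem (by
      intro hmem
      rw [Finset.mem_filter] at hmem
      omega)] at hcard2
    omega
  set Φ : ℕ × ℕ → ℕ × ℕ := fun c => (sigmaStep A T)^[T c - jK c] c with hΦ
  have hΦ_self : ∀ c : ℕ × ℕ, T c ≤ jK c → Φ c = c := by
    intro c hc
    rw [hΦ]
    dsimp only
    rw [Nat.sub_eq_zero_of_le hc, Function.iterate_zero_apply]
  have hΦ_chain : ∀ c : ℕ × ℕ, c ∈ A.cells → c.1 ∈ K → jK c < T c →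
      Φ c ∈ A.cells ∧ T (Φ c) = jK c ∧ (Φ c).1 < c.1 := by
    intro c hcell hcK hlt
    have h1 := hj_pos c hcK
    obtain ⟨g1, g2, g3⟩ := sigma_iter_spec hLR (T c - jK c) hcell (by omega)
    simp only [hΦ]
    exact ⟨g1, by omega, g3 (by omega)⟩
  apply Finset.card_le_card_of_injOn Φ
  · intro c hc
    rw [Finset.mem_coe, Finset.mem_filter] at hc
    obtain ⟨hcell, hcK⟩ := hc
    rcases le_or_gt (T c) (jK c) with hle | hlt
    · rw [Finset.mem_coe, Finset.mem_filter, hΦ_self c hle]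
      exact ⟨hcell, le_trans hle (hj_le c)⟩
    · obtain ⟨g1, g2, _⟩ := hΦ_chain c hcell hcK hlt
      rw [Finset.mem_coe, Finset.mem_filter]
      exact ⟨g1, by have := hj_le c; omega⟩
  · intro x hx y hy heq
    rw [Finset.mem_coe, Finset.mem_filter] at hx hy
    obtain ⟨hxcell, hxK⟩ := hx
    obtain ⟨hycell, hyK⟩ := hy
    rcases le_or_gt (T x) (jK x) with hlex | hltx <;>
      rcases le_or_gt (T y) (jK y) with hley | hlty
    · rw [hΦ_self x hlex, hΦ_self y hley] at heq
      exact heq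
    · exfalso
      rw [hΦ_self x hlex] at heq
      obtain ⟨g1, g2, g3⟩ := hΦ_chain y hycell hyK hlty
      rw [← heq] at g2 g3
      have := hj_strict x y g3 hyK
      omega
    · exfalso
      rw [hΦ_self y hley] at heq
      obtain ⟨g1, g2, g3⟩ := hΦ_chain x hxcell hxK hltx
      rw [heq] at g2 g3
      have := hj_strict y x g3 hxK
      omega
    · obtain ⟨gx1, gx2, gx3⟩ := hΦ_chain x hxcell hxK hltx
      obtain ⟨gy1, gy2, gy3⟩ := hΦ_chain y hycell hyK hlty
      have hjeq : jK x = jK y := by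
        rw [← gx2, ← gy2, heq]
      have hrow : x.1 = y.1 := by
        by_contra hne
        rcases Nat.lt_or_ge x.1 y.1 with hlt | hge
        · have := hj_strict x y hlt hyK
          omega
        · have := hj_strict y x (by omega) hxK
          omega
      have hj1 := hj_pos x hxK
      rcases Nat.lt_trichotomy (T x) (T y) with hTlt | hTeq | hTgt
      · exact absurd (chain_absurd hLR hxcell hycell hj1 hltx (by omega) hrow hTlt
          (by rw [hΦ] at heq; dsimp only at heq; rw [← hjeq] at heq; exact heq)) (fun h => h)
      · have heq2 : (sigmaStep A T)^[T x - jK x] x = (sigmaStep A T)^[T x - jK x] y := by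
          rw [hΦ] at heq
          dsimp only at heq
          rw [show T y - jK y = T x - jK x by omega] at heq
          exact heq
        exact sigma_iter_inj hLR (T x - jK x) hxcell hycell hTeq (by omega) heq2
      · exact absurd (chain_absurd hLR hycell hxcell (by omega) hlty (by omega) hrow.symm hTgt
          (by rw [hΦ] at heq; dsimp only at heq; rw [hjeq] at heq; exact heq.symm)) (fun h => h)

end SkewShape

/-- If `A` and `B` are skew shapes with `supp A = supp B`, then
`rows A = rows B` and `cols A = cols B`; in particular, `A` and `B` have the same
number of nonempty rows and the same number of nonempty columns. -/
theorem supp_eq_rows_cols (A B : SkewShape) (h : A.supp = B.supp) :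
    A.rows = B.rows ∧ A.cols = B.cols ∧
      A.numRows = B.numRows ∧ A.numCols = B.numCols := by
  have hrA : A.rows ∈ B.supp := by rw [← h]; exact SkewShape.rows_mem_supp
  have hrB : B.rows ∈ A.supp := by rw [h]; exact SkewShape.rows_mem_supp
  have hrows : A.rows = B.rows :=
    domle_antisymm (SkewShape.zero_not_mem_rows A) (SkewShape.zero_not_mem_rows B)
      (SkewShape.domle_rows hrB) (SkewShape.domle_rows hrA)
  have hcA : conj A.cols ∈ B.supp := by rw [← h]; exact SkewShape.conj_cols_mem_supp
  have hcB : conj B.cols ∈ A.supp := by rw [h]; exact SkewShape.conj_cols_mem_supp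
  have hconj : conj A.cols = conj B.cols :=
    domle_antisymm (zero_not_mem_conj _) (zero_not_mem_conj _)
      (SkewShape.domle_conj_cols hcA) (SkewShape.domle_conj_cols hcB)
  have hcols : A.cols = B.cols := by
    apply eq_of_Gf_eq (SkewShape.zero_not_mem_cols A) (SkewShape.zero_not_mem_cols B)
    intro q hq
    have h1 := part_conj A.cols (q - 1)
    have h2 := part_conj B.cols (q - 1)
    rw [hconj] at h1
    have e : q - 1 + 1 = q := by omega
    rw [e] at h1 h2
    omega
  refine ⟨hrows, hcols, ?_, ?_⟩
  · rw [← SkewShape.card_rows, ← SkewShape.card_rows, hrows]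
  · rw [← SkewShape.card_cols, ← SkewShape.card_cols, hcols]
end
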